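/- arXiv:1007.2775 — 8 statements merged into one kernel-verified Lean document; each statement's English description precedes it below -/
import Mathlib

section
/- For every dimension d ≥ 1 and every n ≥ 1, M_d(n,n) ≤ E_d(2n). -/
open Pointwise Filter

noncomputable section

/-- A set in `ℝ^d` is convexly independent if no point of it lies in the
convex hull of the other points. -/
def ConvInd {d : ℕ} (S : Set (Fin d → ℝ)) : Prop :=
  ∀ p ∈ S, p ∉ convexHull ℝ (S \ {p})

/-- `Efun d n` : the maximum, over `n`-point sets `P ⊂ ℝ^d`, of the number of
unordered pairs of distinct points of `P` whose midpoints are pairwise distinct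
and form a convexly independent set.  Unordered pairs are encoded as ordered
pairs with the reversed pair excluded. -/
def Efun (d n : ℕ) : ℕ :=
  sSup {k | ∃ (P : Finset (Fin d → ℝ)) (T : Finset ((Fin d → ℝ) × (Fin d → ℝ))),
    P.card = n ∧
    (∀ e ∈ T, e.1 ∈ P ∧ e.2 ∈ P ∧ e.1 ≠ e.2 ∧ (e.2, e.1) ∉ T) ∧
    Set.InjOn (fun e : (Fin d → ℝ) × (Fin d → ℝ) => midpoint ℝ e.1 e.2) ↑T ∧
    ConvInd ((fun e : (Fin d → ℝ) × (Fin d → ℝ) => midpoint ℝ e.1 e.2) '' ↑T) ∧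
    T.card = k}

/-- `Mfun d m n` : the maximum, over `m`-point sets `P` and `n`-point sets `Q` in `ℝ^d`,
of the size of a convexly independent subset of the Minkowski sum `P + Q`. -/
def Mfun (d m n : ℕ) : ℕ :=
  sSup {k | ∃ P Q S : Finset (Fin d → ℝ),
    P.card = m ∧ Q.card = n ∧
    (S : Set (Fin d → ℝ)) ⊆ (P : Set (Fin d → ℝ)) + (Q : Set (Fin d → ℝ)) ∧
    ConvInd (S : Set (Fin d → ℝ)) ∧ S.card = k}

/-- A norm on `ℝ^d` whose unit ball is strictly convex (the unit sphere contains
no nondegenerate segment, expressed via midpoints of distinct unit vectors). -/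
structure StrictNorm (d : ℕ) where
  toFun : (Fin d → ℝ) → ℝ
  eq_zero_iff : ∀ x, toFun x = 0 ↔ x = 0
  smul_eq : ∀ (a : ℝ) (x : Fin d → ℝ), toFun (a • x) = |a| * toFun x
  add_le : ∀ x y, toFun (x + y) ≤ toFun x + toFun y
  strictly_convex : ∀ x y, toFun x = 1 → toFun y = 1 → x ≠ y →
    toFun ((1 / 2 : ℝ) • (x + y)) < 1

/-- A (not necessarily strictly convex) norm on `ℝ^d`. -/
structure NormOn (d : ℕ) where
  toFun : (Fin d → ℝ) → ℝ
  eq_zero_iff : ∀ x, toFun x = 0 ↔ x = 0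
  smul_eq : ∀ (a : ℝ) (x : Fin d → ℝ), toFun (a • x) = |a| * toFun x
  add_le : ∀ x y, toFun (x + y) ≤ toFun x + toFun y

/-- `Wfun d n` : the maximum, over `n`-point sets `S ⊂ ℝ^d` and strictly convex
norms on `ℝ^d`, of the number of pairwise nonparallel unit-distance pairs in `S`.
(The nonparallelity condition between distinct ordered pairs automatically rules
out listing any unordered pair twice.) -/
def Wfun (d n : ℕ) : ℕ :=
  sSup {k | ∃ (S : Finset (Fin d → ℝ)) (ν : StrictNorm d)
      (T : Finset ((Fin d → ℝ) × (Fin d → ℝ))),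
    S.card = n ∧
    (∀ e ∈ T, e.1 ∈ S ∧ e.2 ∈ S ∧ ν.toFun (e.1 - e.2) = 1) ∧
    (∀ e ∈ T, ∀ f ∈ T, e ≠ f → ∀ c : ℝ, e.1 - e.2 ≠ c • (f.1 - f.2)) ∧
    T.card = k}

/-- `Ufun d n` : the maximum, over `n`-point sets `S ⊂ ℝ^d` and strictly convex
norms on `ℝ^d`, of the number of unordered unit-distance pairs in `S`. -/
def Ufun (d n : ℕ) : ℕ :=
  sSup {k | ∃ (S : Finset (Fin d → ℝ)) (ν : StrictNorm d)
      (T : Finset ((Fin d → ℝ) × (Fin d → ℝ))),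
    S.card = n ∧
    (∀ e ∈ T, e.1 ∈ S ∧ e.2 ∈ S ∧ e.1 ≠ e.2 ∧ ν.toFun (e.1 - e.2) = 1 ∧ (e.2, e.1) ∉ T) ∧
    T.card = k}

/-- `Dfun d n` : the maximum, over `n`-point sets `S ⊂ ℝ^d` and strictly convex
norms on `ℝ^d`, of the number of unordered diameter pairs in `S` (pairs of points
whose distance equals the diameter `D` of `S` in the norm). -/
def Dfun (d n : ℕ) : ℕ :=
  sSup {k | ∃ (S : Finset (Fin d → ℝ)) (ν : StrictNorm d)
      (T : Finset ((Fin d → ℝ) × (Fin d → ℝ))) (D : ℝ),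
    S.card = n ∧
    (∀ p ∈ S, ∀ q ∈ S, ν.toFun (p - q) ≤ D) ∧
    (∃ p ∈ S, ∃ q ∈ S, ν.toFun (p - q) = D) ∧
    (∀ e ∈ T, e.1 ∈ S ∧ e.2 ∈ S ∧ e.1 ≠ e.2 ∧ ν.toFun (e.1 - e.2) = D ∧ (e.2, e.1) ∉ T) ∧
    T.card = k}

/-- A family of sets in `ℝ^d` is strictly antipodal if for each pair of points
`p ∈ A i`, `q ∈ A j` with `i ≠ j` there is a linear functional `φ` with
`φ p < φ r < φ q` for every other point `r` of the union. -/
def StrictlyAntipodal {d : ℕ} {ι : Type*} (A : ι → Set (Fin d → ℝ)) : Prop :=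
  ∀ i j, i ≠ j → ∀ p ∈ A i, ∀ q ∈ A j, ∃ φ : (Fin d → ℝ) →ₗ[ℝ] ℝ,
    ∀ r ∈ ⋃ t, A t, r ≠ p → r ≠ q → φ p < φ r ∧ φ r < φ q

/-- `aconst d` = `a(d)` : the largest `k` such that for every `m` there is a strictly
antipodal family of `k` sets in `ℝ^d`, each of size at least `m`. -/
def aconst (d : ℕ) : ℕ :=
  sSup {k | ∀ m : ℕ, ∃ A : Fin k → Finset (Fin d → ℝ),
    (∀ i, m ≤ (A i).card) ∧ StrictlyAntipodal (fun i => ((A i : Set (Fin d → ℝ))))}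

/-- The set of midpoints between points in different members of a family of finite sets. -/
def midSet {d : ℕ} {ι : Type*} (B : ι → Finset (Fin d → ℝ)) : Set (Fin d → ℝ) :=
  {x | ∃ i j, i ≠ j ∧ ∃ p ∈ B i, ∃ q ∈ B j, x = midpoint ℝ p q}

/-- The set of differences between points in different members of a family of sets. -/
def diffSet {d : ℕ} {ι : Type*} (A : ι → Set (Fin d → ℝ)) : Set (Fin d → ℝ) :=
  {x | ∃ i j, i ≠ j ∧ ∃ p ∈ A i, ∃ q ∈ A j, x = p - q}

/-! Write each point of a convexly independent `S ⊆ P + Q` as `s = p_s + q_s`. After the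
blow-up `p ↦ 2p + u`, `q ↦ 2q - u`, the pair `(2p_s + u, 2q_s - u)` has midpoint exactly `s`,
so these `|S|` pairs have convexly independent midpoints. A shift `u ∉ Q - P` makes the two
blown-up copies disjoint, so they form a set of `|P| + |Q|` points. -/

section Blowup

variable {E : Type*} [AddCommGroup E] [Module ℝ E]

lemma midpoint_two_smul_add_two_smul_sub (a b u : E) :
    midpoint ℝ ((2 : ℝ) • a + u) ((2 : ℝ) • b - u) = a + b := by
  rw [midpoint_eq_smul_add, invOf_eq_inv]
  module

lemma injective_two_smul_add (u : E) : Function.Injective fun x : E => (2 : ℝ) • x + u :=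
  (add_left_injective u).comp (smul_right_injective E two_ne_zero)

lemma injective_two_smul_sub (u : E) : Function.Injective fun x : E => (2 : ℝ) • x - u :=
  (sub_left_injective (b := u)).comp (smul_right_injective E two_ne_zero)

variable [DecidableEq E]

lemma disjoint_image_two_smul_add_image_two_smul_sub {P Q : Finset E} {u : E}
    (hu : u ∉ Q - P) :
    Disjoint (P.image fun x => (2 : ℝ) • x + u) (Q.image fun x => (2 : ℝ) • x - u) := by
  refine Finset.disjoint_left.2 ?_
  simp only [Finset.mem_image]
  rintro _ ⟨p, hp, rfl⟩ ⟨q, hq, hpq⟩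
  have hu' : u = q - p := by
    apply smul_right_injective E (two_ne_zero (α := ℝ))
    simp only [smul_sub]
    linear_combination (norm := module) (-1 : ℝ) • hpq
  exact hu (Finset.mem_sub.2 ⟨q, hq, p, hp, hu'.symm⟩)

end Blowup

lemma le_Efun {d : ℕ} {P : Finset (Fin d → ℝ)} {T : Finset ((Fin d → ℝ) × (Fin d → ℝ))}
    (hT : ∀ e ∈ T, e.1 ∈ P ∧ e.2 ∈ P ∧ e.1 ≠ e.2 ∧ (e.2, e.1) ∉ T)
    (hinj : Set.InjOn (fun e : (Fin d → ℝ) × (Fin d → ℝ) => midpoint ℝ e.1 e.2) ↑T)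
    (hind : ConvInd ((fun e : (Fin d → ℝ) × (Fin d → ℝ) => midpoint ℝ e.1 e.2) '' ↑T)) :
    T.card ≤ Efun d P.card := by
  classical
  refine le_csSup ⟨P.card * P.card, ?_⟩ ⟨P, T, rfl, hT, hinj, hind, rfl⟩
  rintro _ ⟨P', T', hP', hT', -, -, rfl⟩
  calc T'.card ≤ (P' ×ˢ P').card :=
        Finset.card_le_card fun e he => Finset.mem_product.2 ⟨(hT' e he).1, (hT' e he).2.1⟩
    _ = P.card * P.card := by rw [Finset.card_product, hP']

lemma le_Efun_of_disjoint {d : ℕ} {A B : Finset (Fin d → ℝ)}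
    {T : Finset ((Fin d → ℝ) × (Fin d → ℝ))} (hAB : Disjoint A B)
    (hT : ∀ e ∈ T, e.1 ∈ A ∧ e.2 ∈ B)
    (hinj : Set.InjOn (fun e : (Fin d → ℝ) × (Fin d → ℝ) => midpoint ℝ e.1 e.2) ↑T)
    (hind : ConvInd ((fun e : (Fin d → ℝ) × (Fin d → ℝ) => midpoint ℝ e.1 e.2) '' ↑T)) :
    T.card ≤ Efun d (A.card + B.card) := by
  classical
  rw [← Finset.card_union_of_disjoint hAB]
  refine le_Efun (fun e he => ?_) hinj hind
  obtain ⟨hA, hB⟩ := hT e he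
  refine ⟨Finset.mem_union_left _ hA, Finset.mem_union_right _ hB,
    fun h => Finset.disjoint_left.1 hAB hA (h ▸ hB), fun he' => ?_⟩
  exact Finset.disjoint_left.1 hAB (hT _ he').1 hB

lemma card_le_Efun_of_subset_add {d : ℕ} [Nonempty (Fin d)] {P Q S : Finset (Fin d → ℝ)}
    (hS : (S : Set (Fin d → ℝ)) ⊆ (P : Set (Fin d → ℝ)) + (Q : Set (Fin d → ℝ)))
    (hind : ConvInd (S : Set (Fin d → ℝ))) :
    S.card ≤ Efun d (P.card + Q.card) := by
  classical
  obtain ⟨u, hu⟩ := Infinite.exists_notMem_finset (Q - P)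
  have hdec : ∀ s ∈ S, ∃ e : (Fin d → ℝ) × (Fin d → ℝ), e.1 ∈ P ∧ e.2 ∈ Q ∧ e.1 + e.2 = s :=
    fun s hs => by
      obtain ⟨p, hp, q, hq, hpq⟩ := hS hs
      exact ⟨(p, q), hp, hq, hpq⟩
  choose! dec hdecP hdecQ hdec_add using hdec
  let edge : (Fin d → ℝ) → (Fin d → ℝ) × (Fin d → ℝ) :=
    fun s => ((2 : ℝ) • (dec s).1 + u, (2 : ℝ) • (dec s).2 - u)
  let mid : (Fin d → ℝ) × (Fin d → ℝ) → (Fin d → ℝ) := fun e => midpoint ℝ e.1 e.2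
  have hmid : Set.LeftInvOn mid edge S := fun s hs => by
    simp only [mid, edge, midpoint_two_smul_add_two_smul_sub, hdec_add s hs]
  have hcard : (S.image edge).card = S.card := Finset.card_image_of_injOn hmid.injOn
  have hbound := le_Efun_of_disjoint (T := S.image edge)
    (disjoint_image_two_smul_add_image_two_smul_sub hu)
    (by
      simp only [Finset.mem_image]
      rintro _ ⟨s, hs, rfl⟩
      exact ⟨⟨_, hdecP s hs, rfl⟩, ⟨_, hdecQ s hs, rfl⟩⟩)
    (by
      rw [Finset.coe_image]
      exact Set.InjOn.image_of_comp (Set.injOn_id _ |>.congr fun s hs => (hmid hs).symm))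
    (by rwa [Finset.coe_image, hmid.image_image])
  rwa [hcard, Finset.card_image_of_injective _ (injective_two_smul_add u),
    Finset.card_image_of_injective _ (injective_two_smul_sub u)] at hbound

theorem M_le_E_two_general (d n : ℕ) (hd : 1 ≤ d) :
    Mfun d n n ≤ Efun d (2 * n) := by
  have : Nonempty (Fin d) := ⟨⟨0, hd⟩⟩
  refine csSup_le' ?_
  rintro _ ⟨P, Q, S, hP, hQ, hS, hind, rfl⟩
  simpa [hP, hQ, two_mul] using card_le_Efun_of_subset_add hS hind

/-- For every `d ≥ 1` and `n ≥ 1`, `M_d(n,n) ≤ E_d(2n)`. -/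
theorem M_le_E_two (d n : ℕ) (hd : 1 ≤ d) (hn : 1 ≤ n) :
    Mfun d n n ≤ Efun d (2 * n) :=
  M_le_E_two_general d n hd
end
end

section
/- For every dimension d ≥ 2 and every n ≥ 1, M_d(n,n) ≤ 2·W_d(2n). -/
open Pointwise Filter

noncomputable section

/-!
Expose each point `s` of a convexly independent `S ⊆ P + Q` by a functional `F s`. Keeping at
least half of `S`, all `F s` are negative on a common direction; a translation vector `w` far out
in that direction and off every line through two points of `S` makes each `s - w` exposed by
`F s` in the symmetric set `±(S - w)`. Intersecting, for each `s`, two large Euclidean balls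
through `±(s - w)` gives a strictly convex symmetric body with `S - w` on its boundary, and its
gauge is a strictly convex norm. Each `s = p + q` then yields the unit segment from `w - q` to `p`,
of direction `s - w`: these are pairwise nonparallel, with endpoints in `P ∪ (w - Q)`.
-/

open Metric Bornology Topology
open scoped RealInnerProductSpace

section Normed

variable {E : Type*} [NormedAddCommGroup E] [NormedSpace ℝ E]

theorem exists_ne_zero_forall_lt_of_notMem_convexHull [Nontrivial E] {S : Set E} (hS : S.Finite)
    {s : E} (hs : s ∉ convexHull ℝ (S \ {s})) :
    ∃ f : E →L[ℝ] ℝ, f ≠ 0 ∧ ∀ x ∈ S, x ≠ s → f x < f s := by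
  obtain ⟨f, u, hfu, hus⟩ := geometric_hahn_banach_closed_point (convex_convexHull ℝ _)
    ((hS.sdiff (t := {s})).isCompact_convexHull (𝕜 := ℝ)).isClosed hs
  have hlt (x : E) (hx : x ∈ S) (hxs : x ≠ s) : f x < f s :=
    (hfu x (subset_convexHull ℝ _ ⟨hx, hxs⟩)).trans hus
  by_cases hf : f = 0
  · -- then `S ⊆ {s}`, and any nonzero functional will do
    obtain ⟨v, hv⟩ := exists_ne (0 : E)
    obtain ⟨f', hf'⟩ := SeparatingDual.exists_ne_zero (R := ℝ) hv
    refine ⟨f', fun h => hf' (by simp [h]), fun x hx hxs => ?_⟩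
    simpa [hf] using hlt x hx hxs
  · exact ⟨f, hf, hlt⟩

theorem dense_setOf_apply_ne {f : E →L[ℝ] ℝ} (hf : f ≠ 0) (c : ℝ) : Dense {w | f w ≠ c} :=
  (dense_compl_singleton c).preimage (f.isOpenMap_of_ne_zero hf)

theorem exists_ne_zero_apply_eq_zero [FiniteDimensional ℝ E] (hE : 2 ≤ Module.finrank ℝ E)
    (v : E) : ∃ φ : E →L[ℝ] ℝ, φ ≠ 0 ∧ φ v = 0 := by
  have hlt : ℝ ∙ v < ⊤ := by
    refine lt_top_iff_ne_top.2 fun htop => ?_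
    have := finrank_span_le_card (R := ℝ) ({v} : Set E)
    rw [htop, finrank_top] at this
    simp at this
    omega
  obtain ⟨φ, hφ, hmap⟩ := Submodule.exists_dual_map_eq_bot_of_lt_top hlt inferInstance
  have hv : φ v ∈ (ℝ ∙ v).map φ := Submodule.mem_map_of_mem (Submodule.mem_span_singleton_self v)
  rw [hmap] at hv
  exact ⟨LinearMap.toContinuousLinearMap φ, by simpa using hφ, (Submodule.mem_bot ℝ).1 hv⟩

theorem sub_ne_smul_sub_of_apply_ne {φ : E →L[ℝ] ℝ} {s x w : E} (hsx : s ≠ x)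
    (hx : φ x = φ s) (hw : φ w ≠ φ s) (c : ℝ) : s - w ≠ c • (x - w) := by
  intro hc
  have happ := congrArg φ hc
  rw [map_sub, map_smul, map_sub, hx, smul_eq_mul] at happ
  obtain rfl : c = 1 := by
    have : (1 - c) * (φ s - φ w) = 0 := by linarith
    rcases mul_eq_zero.1 this with h | h
    · linarith
    · exact absurd (by linarith) hw
  rw [one_smul] at hc
  exact hsx (sub_left_injective hc)

theorem exists_translate_of_forall_apply_neg [FiniteDimensional ℝ E]
    (hE : 2 ≤ Module.finrank ℝ E) (S : Finset E) (F : E → E →L[ℝ] ℝ) {u : E}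
    (hu : ∀ s ∈ S, F s u < 0) :
    ∃ w, (∀ s ∈ S, ∀ x ∈ S, 2 * F s w < F s (s + x)) ∧
      ∀ s ∈ S, ∀ x ∈ S, s ≠ x → ∀ c : ℝ, s - w ≠ c • (x - w) := by
  set O := {w : E | ∀ s ∈ S, ∀ x ∈ S, 2 * F s w < F s (s + x)}
  have hO : IsOpen O := by
    simp only [O, Set.ofPred_forall]
    exact isOpen_biInter_finset fun s _ => isOpen_biInter_finset fun x _ =>
      isOpen_lt (continuous_const.mul (F s).continuous) continuous_const
  have hO_ne : O.Nonempty := by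
    obtain ⟨t, ht⟩ := ((eventually_all_finset S).2 fun s hs => (eventually_all_finset S).2
      fun x _ => ((tendsto_id.atTop_mul_const_of_neg (hu s hs)).const_mul_atBot
        two_pos).eventually_lt_atBot (F s (s + x))).exists
    exact ⟨t • u, fun s hs x hx => by simpa using ht s hs x hx⟩
  choose φ hφ0 hφ using fun p : E × E => exists_ne_zero_apply_eq_zero hE (p.2 - p.1)
  set G := ⋂₀ ((fun p => {w | φ p w ≠ φ p p.1}) '' (S.offDiag : Set (E × E)))
  have hG : Dense G := (S.offDiag.finite_toSet.image _).dense_sInter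
    (Set.forall_mem_image.2 fun p _ => isOpen_ne_fun (φ p).continuous continuous_const)
    (Set.forall_mem_image.2 fun p _ => dense_setOf_apply_ne (hφ0 p) _)
  obtain ⟨w, hwO, hwG⟩ := hG.inter_open_nonempty O hO hO_ne
  refine ⟨w, hwO, fun s hs x hx hsx => sub_ne_smul_sub_of_apply_ne (φ := φ (s, x)) hsx ?_ ?_⟩
  · simpa [sub_eq_zero] using hφ (s, x)
  · exact hwG _ ⟨(s, x), Finset.mem_offDiag.2 ⟨hs, hx, hsx⟩, rfl⟩

theorem exists_subset_forall_apply_neg {ι : Type*} (S : Finset ι) (F : ι → E →L[ℝ] ℝ)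
    (hF : ∀ s ∈ S, F s ≠ 0) :
    ∃ v : E, ∃ S' ⊆ S, (∀ s ∈ S', F s v < 0) ∧ S.card ≤ 2 * S'.card := by
  classical
  obtain ⟨u, hu⟩ := Module.Dual.exists_forall_ne_zero_of_forall_exists (K := ℝ)
    (fun s : S => (F s : E →ₗ[ℝ] ℝ)) fun s => by simpa [DFunLike.ne_iff] using hF s s.2
  have hsplit := Finset.card_filter_add_card_filter_not (s := S) (p := fun s => F s u < 0)
  rcases le_total (S.filter fun s => ¬ F s u < 0).card (S.filter fun s => F s u < 0).card
    with h | h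
  · exact ⟨u, S.filter fun s => F s u < 0, Finset.filter_subset _ _,
      fun s hs => (Finset.mem_filter.1 hs).2, by omega⟩
  · refine ⟨-u, S.filter fun s => ¬ F s u < 0, Finset.filter_subset _ _, fun s hs => ?_, by omega⟩
    obtain ⟨hs, hnonneg⟩ := Finset.mem_filter.1 hs
    rw [map_neg, neg_lt_zero]
    exact (not_lt.1 hnonneg).lt_of_ne (hu ⟨s, hs⟩).symm

end Normed

theorem strictConvex_biInter_closedBall {ι E : Type*} [NormedAddCommGroup E] [NormedSpace ℝ E]
    [StrictConvexSpace ℝ E] (s : Finset ι) (c : ι → E) (r : ι → ℝ) :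
    StrictConvex ℝ (⋂ i ∈ s, closedBall (c i) (r i)) := by
  intro x hx y hy hxy a b ha hb hab
  refine (isOpen_biInter_finset fun i _ => isOpen_ball).subset_interior_iff.2
    (Set.iInter₂_mono fun i _ => ball_subset_closedBall) ?_
  exact Set.mem_iInter₂.2 fun i hi =>
    combo_mem_ball_of_ne (Set.mem_iInter₂.1 hx i hi) (Set.mem_iInter₂.1 hy i hi) hxy ha hb hab

theorem mem_frontier_of_subset_closedBall {E : Type*} [NormedAddCommGroup E] [NormedSpace ℝ E]
    {B : Set E} {a c : E} {r : ℝ} (ha : a ∈ B) (hB : B ⊆ closedBall c r) (hac : dist a c = r)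
    (hr : r ≠ 0) : a ∈ frontier B := by
  refine ⟨subset_closure ha, fun hint => ?_⟩
  have := interior_mono hB hint
  rw [interior_closedBall _ hr, mem_ball, hac] at this
  exact lt_irrefl _ this

section InnerProductSpace

variable {E : Type*} [NormedAddCommGroup E] [InnerProductSpace ℝ E]

theorem eventually_mem_ball_sub_smul {g y z : E} (h : ⟪g, y⟫ < ⟪g, z⟫) :
    ∀ᶠ ρ in atTop, y ∈ ball (z - ρ • g) (ρ * ‖g‖) := by
  have hgap : 0 < ⟪g, z - y⟫ := by rw [inner_sub_right]; linarith
  filter_upwards [eventually_gt_atTop (‖y - z‖ ^ 2 / (2 * ⟪g, z - y⟫)), eventually_ge_atTop 0]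
    with ρ hρ hρ0
  rw [div_lt_iff₀ (by positivity)] at hρ
  have hsq : ‖y - z + ρ • g‖ ^ 2 < (ρ * ‖g‖) ^ 2 := by
    rw [norm_add_sq_real, norm_smul, Real.norm_eq_abs, abs_of_nonneg hρ0, inner_smul_right,
      real_inner_comm, inner_sub_right]
    rw [inner_sub_right] at hρ
    nlinarith
  rw [mem_ball, dist_eq_norm, sub_sub_eq_add_sub, add_sub_right_comm]
  exact lt_of_pow_lt_pow_left₀ 2 (by positivity) hsq

theorem exists_strictConvex_symmetric_body {A : Finset E} (hA : A.Nonempty) (g : E → E)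
    (hlt : ∀ a ∈ A, ∀ b ∈ A, b ≠ a → ⟪g a, b⟫ < ⟪g a, a⟫)
    (hpos : ∀ a ∈ A, ∀ b ∈ A, 0 < ⟪g a, a⟫ + ⟪g a, b⟫) :
    ∃ B : Set E, StrictConvex ℝ B ∧ IsClosed B ∧ IsBounded B ∧ B ∈ 𝓝 0 ∧
      (∀ x ∈ B, -x ∈ B) ∧ ↑A ⊆ frontier B := by
  classical
  obtain ⟨ρ, ⟨hρ, hball⟩, hball_neg, hball_zero⟩ : ∃ ρ : ℝ, (0 < ρ ∧
      ∀ a ∈ A, ∀ b ∈ A.erase a, b ∈ ball (a - ρ • g a) (ρ * ‖g a‖)) ∧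
      (∀ a ∈ A, ∀ b ∈ A, -b ∈ ball (a - ρ • g a) (ρ * ‖g a‖)) ∧
      (∀ a ∈ A, (0 : E) ∈ ball (a - ρ • g a) (ρ * ‖g a‖)) := by
    refine (((eventually_gt_atTop 0).and ?_).and (Filter.Eventually.and ?_ ?_)).exists
    · exact (eventually_all_finset A).2 fun a ha => (eventually_all_finset _).2 fun b hb =>
        eventually_mem_ball_sub_smul
          (hlt a ha b (Finset.mem_erase.1 hb).2 (Finset.mem_erase.1 hb).1)
    · refine (eventually_all_finset A).2 fun a ha => (eventually_all_finset A).2 fun b hb =>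
        eventually_mem_ball_sub_smul ?_
      rw [inner_neg_right]; linarith [hpos a ha b hb]
    · refine (eventually_all_finset A).2 fun a ha => eventually_mem_ball_sub_smul ?_
      rw [inner_zero_right]; linarith [hpos a ha a ha]
  set c : E → E := fun a => a - ρ • g a
  set r : E → ℝ := fun a => ρ * ‖g a‖
  have hdist (a : E) : dist a (c a) = r a := by
    simp [c, r, norm_smul, abs_of_pos hρ]
  have hr (a : E) (ha : a ∈ A) : r a ≠ 0 := by
    have : g a ≠ 0 := by
      intro h
      have := hpos a ha a ha
      simp [h] at this
    positivity
  have hmem (a : E) (ha : a ∈ A) (b : E) (hb : b ∈ A) : b ∈ closedBall (c a) (r a) := by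
    rcases eq_or_ne b a with rfl | hba
    · exact (hdist b).le
    · exact ball_subset_closedBall (hball a ha b (Finset.mem_erase.2 ⟨hba, hb⟩))
  set B₀ := ⋂ a ∈ A, closedBall (c a) (r a)
  have hB₀ : B₀ ∈ 𝓝 0 :=
    (biInter_finset_mem A).2 fun a ha => closedBall_mem_nhds_of_mem (hball_zero a ha)
  obtain ⟨a₀, ha₀⟩ := hA
  refine ⟨B₀ ∩ -B₀, (strictConvex_biInter_closedBall A c r).inter
      (strictConvex_biInter_closedBall A c r).neg,
    (isClosed_biInter fun a _ => isClosed_closedBall).inter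
      (isClosed_biInter fun a _ => isClosed_closedBall).neg,
    isBounded_closedBall.subset (Set.inter_subset_left.trans (Set.biInter_subset_of_mem ha₀)),
    inter_mem hB₀ (neg_mem_nhds_zero _ hB₀), fun x hx => ⟨hx.2, by simpa using hx.1⟩, ?_⟩
  intro a ha
  have haB : a ∈ B₀ ∩ -B₀ := ⟨Set.mem_iInter₂.2 fun b hb => hmem b hb a ha,
    Set.mem_neg.2 (Set.mem_iInter₂.2 fun b hb => ball_subset_closedBall (hball_neg b hb a ha))⟩
  exact mem_frontier_of_subset_closedBall haB
    (Set.inter_subset_left.trans (Set.biInter_subset_of_mem ha)) (hdist a) (hr a ha)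

end InnerProductSpace

def StrictNorm.ofGauge {d : ℕ} {E : Type*} [NormedAddCommGroup E] [NormedSpace ℝ E]
    (e : (Fin d → ℝ) ≃ₗ[ℝ] E) {B : Set E} (hsc : StrictConvex ℝ B) (hcl : IsClosed B)
    (hb : IsBounded B) (h0 : B ∈ 𝓝 0) (hneg : ∀ x ∈ B, -x ∈ B) : StrictNorm d where
  toFun x := gauge B (e x)
  eq_zero_iff x := by
    rw [gauge_eq_zero (absorbent_nhds_zero h0) ((NormedSpace.isVonNBounded_iff ℝ).2 hb),
      e.map_eq_zero_iff]
  smul_eq a x := by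
    rw [map_smul, gauge_smul ((balanced_iff_neg_mem hsc.convex).2 hneg), Real.norm_eq_abs]
  add_le x y := by
    rw [map_add]
    exact gauge_add_le hsc.convex (absorbent_nhds_zero h0) _ _
  strictly_convex x y hx hy hxy := by
    have mem_of_gauge_eq_one (z : E) (hz : gauge B z = 1) : z ∈ B :=
      hcl.closure_subset ((gauge_le_one_iff_mem_closure hsc.convex h0).1 hz.le)
    rw [map_smul, map_add, smul_add, gauge_lt_one_iff_mem_interior hsc.convex h0]
    exact hsc (mem_of_gauge_eq_one _ hx) (mem_of_gauge_eq_one _ hy) (e.injective.ne hxy)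
      (by norm_num) (by norm_num) (by norm_num)

theorem exists_strictNorm_eq_one {d : ℕ} {A : Finset (Fin d → ℝ)} (hA : A.Nonempty)
    (f : (Fin d → ℝ) → (Fin d → ℝ) →L[ℝ] ℝ)
    (hlt : ∀ a ∈ A, ∀ b ∈ A, b ≠ a → f a b < f a a)
    (hpos : ∀ a ∈ A, ∀ b ∈ A, 0 < f a a + f a b) :
    ∃ ν : StrictNorm d, ∀ a ∈ A, ν.toFun a = 1 := by
  classical
  let e := (EuclideanSpace.equiv (Fin d) ℝ).symm
  let g (a : EuclideanSpace ℝ (Fin d)) : EuclideanSpace ℝ (Fin d) :=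
    (InnerProductSpace.toDual ℝ _).symm ((f (e.symm a)).comp e.symm.toContinuousLinearMap)
  have hg (a : EuclideanSpace ℝ (Fin d)) (b : Fin d → ℝ) : ⟪g a, e b⟫ = f (e.symm a) b := by
    simp [g]
  obtain ⟨B, hsc, hcl, hb, h0, hneg, hAB⟩ := exists_strictConvex_symmetric_body (hA.image e) g
    (by simpa [hg] using hlt) (by simpa [hg] using hpos)
  exact ⟨.ofGauge e.toLinearEquiv hsc hcl hb h0 hneg, fun a ha =>
    (gauge_eq_one_iff_mem_frontier hsc.convex h0).2 (hAB (Finset.mem_image_of_mem e ha))⟩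

theorem le_Wfun {d n : ℕ} (hd : 0 < d) {X : Finset (Fin d → ℝ)} (hX : X.card ≤ n)
    (ν : StrictNorm d) {T : Finset ((Fin d → ℝ) × (Fin d → ℝ))}
    (hT : ∀ e ∈ T, e.1 ∈ X ∧ e.2 ∈ X ∧ ν.toFun (e.1 - e.2) = 1)
    (hpar : ∀ e ∈ T, ∀ f ∈ T, e ≠ f → ∀ c : ℝ, e.1 - e.2 ≠ c • (f.1 - f.2)) :
    T.card ≤ Wfun d n := by
  have : Nonempty (Fin d) := ⟨⟨0, hd⟩⟩
  obtain ⟨Y, hXY, hY⟩ := Infinite.exists_superset_card_eq X n hX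
  refine le_csSup ⟨n * n, ?_⟩ ⟨Y, ν, T, hY, fun e he => ?_, hpar, rfl⟩
  · rintro k ⟨Y, _, T', hY, hT', -, rfl⟩
    calc T'.card ≤ (Y ×ˢ Y).card := Finset.card_le_card fun e he =>
          Finset.mem_product.2 ⟨(hT' e he).1, (hT' e he).2.1⟩
      _ = n * n := by rw [Finset.card_product, hY]
  · exact ⟨hXY (hT e he).1, hXY (hT e he).2.1, (hT e he).2.2⟩

theorem card_le_Wfun_of_subset_add {d : ℕ} (hd : 0 < d) {P Q S : Finset (Fin d → ℝ)}
    (hS : (S : Set (Fin d → ℝ)) ⊆ P + Q) {w : Fin d → ℝ} (ν : StrictNorm d)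
    (hν : ∀ s ∈ S, ν.toFun (s - w) = 1)
    (hpar : ∀ s ∈ S, ∀ x ∈ S, s ≠ x → ∀ c : ℝ, s - w ≠ c • (x - w)) :
    S.card ≤ Wfun d (P.card + Q.card) := by
  classical
  choose! p hp q hq hpq using fun s (hs : s ∈ S) => Set.mem_add.1 (hS hs)
  set pair : (Fin d → ℝ) → (Fin d → ℝ) × (Fin d → ℝ) := fun s => (p s, w - q s)
  have hdiff (s : Fin d → ℝ) (hs : s ∈ S) : (pair s).1 - (pair s).2 = s - w :=
    calc p s - (w - q s) = p s + q s - w := by abel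
      _ = s - w := by rw [hpq s hs]
  have hinj : Set.InjOn pair S := fun s hs x hx h => by
    simpa using (hdiff s hs).symm.trans ((congrArg (fun e => e.1 - e.2) h).trans (hdiff x hx))
  rw [← Finset.card_image_of_injOn hinj]
  refine le_Wfun hd ((Finset.card_union_le P (Q.image (w - ·))).trans
    (Nat.add_le_add_left Finset.card_image_le _)) ν ?_ ?_
  · simp only [Finset.forall_mem_image]
    intro s hs
    refine ⟨Finset.mem_union_left _ (hp s hs),
      Finset.mem_union_right _ (Finset.mem_image_of_mem _ (hq s hs)), ?_⟩
    rw [hdiff s hs]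
    exact hν s hs
  · simp only [Finset.forall_mem_image]
    intro s hs x hx hne
    rw [hdiff s hs, hdiff x hx]
    exact hpar s hs x hx fun h => hne (h ▸ rfl)

theorem M_le_two_W_general (d n : ℕ) (hd : 2 ≤ d) :
    Mfun d n n ≤ 2 * Wfun d (2 * n) := by
  refine csSup_le' ?_
  rintro k ⟨P, Q, S, hP, hQ, hSPQ, hS, rfl⟩
  have : Nonempty (Fin d) := ⟨⟨0, by omega⟩⟩
  choose! F hF0 hF using fun s hs =>
    exists_ne_zero_forall_lt_of_notMem_convexHull S.finite_toSet (hS s hs)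
  obtain ⟨u, S', hS'S, hu, hcard⟩ := exists_subset_forall_apply_neg S F hF0
  obtain ⟨w, hw, hpar⟩ :=
    exists_translate_of_forall_apply_neg (by simpa using hd) S' F hu
  rcases S'.eq_empty_or_nonempty with rfl | hS'
  · have : S.card = 0 := by simpa using hcard
    omega
  obtain ⟨ν, hν⟩ := exists_strictNorm_eq_one (hS'.image (· - w)) (fun a => F (a + w))
    (by
      simp only [Finset.forall_mem_image, sub_add_cancel, map_sub]
      intro s hs x hx hxs
      linarith [hF s (hS'S hs) x (hS'S hx) fun h => hxs (h ▸ rfl)])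
    (by
      simp only [Finset.forall_mem_image, sub_add_cancel, map_sub]
      intro s hs x hx
      linarith [hw s hs x hx, map_add (F s) s x])
  calc S.card ≤ 2 * S'.card := hcard
    _ ≤ 2 * Wfun d (P.card + Q.card) := Nat.mul_le_mul_left 2 <|
        card_le_Wfun_of_subset_add (by omega) ((Finset.coe_subset.2 hS'S).trans hSPQ) ν
          (fun s hs => hν _ (Finset.mem_image_of_mem _ hs)) hpar
    _ = 2 * Wfun d (2 * n) := by rw [hP, hQ, ← two_mul]

/-- For every `d ≥ 2` and `n ≥ 1`, `M_d(n,n) ≤ 2 · W_d(2n)`. -/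
theorem M_le_two_W (d n : ℕ) (hd : 2 ≤ d) (hn : 1 ≤ n) :
    Mfun d n n ≤ 2 * Wfun d (2 * n) :=
  M_le_two_W_general d n hd
end
end

section
/- For every dimension d ≥ 2 and every n ≥ 1, 2·W_d(n) ≤ M_d(n,n): if an n-point set P has W pairwise nonparallel unit-distance pairs in some norm with strictly convex unit sphere S, then the difference set P + (−P) intersects S in at least 2W points, and these points are convexly independent. -/
open Pointwise Filter

noncomputable section

/-! For the `W` pairs `{p, q}`, the vectors `p - q` and `q - p` are `2W` points of `P + (-P)`,
pairwise distinct because the pairs are pairwise nonparallel. They lie on the unit sphere of a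
strictly convex norm, every point of which is an extreme point of the unit ball, so none of them
lies in the convex hull of the others. -/

namespace StrictNorm

variable {d : ℕ} (ν : StrictNorm d)

lemma map_neg (x : Fin d → ℝ) : ν.toFun (-x) = ν.toFun x := by
  simpa using ν.smul_eq (-1) x

lemma map_smul_add_smul_le {a b : ℝ} (ha : 0 ≤ a) (hb : 0 ≤ b) (x y : Fin d → ℝ) :
    ν.toFun (a • x + b • y) ≤ a * ν.toFun x + b * ν.toFun y :=
  (ν.add_le _ _).trans_eq (by rw [ν.smul_eq, ν.smul_eq, abs_of_nonneg ha, abs_of_nonneg hb])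

lemma convex_ball : Convex ℝ {x | ν.toFun x ≤ 1} := by
  intro x hx y hy a b ha hb hab
  have hx' : a * ν.toFun x ≤ a := mul_le_of_le_one_right ha hx
  have hy' : b * ν.toFun y ≤ b := mul_le_of_le_one_right hb hy
  exact (ν.map_smul_add_smul_le ha hb x y).trans (by linarith)

lemma smul_add_smul_lt_one {a b : ℝ} (ha : 0 ≤ a) (hb : 0 < b) (hab : a + b = 1)
    {x y : Fin d → ℝ} (hx : ν.toFun x ≤ 1) (hy : ν.toFun y < 1) :
    ν.toFun (a • x + b • y) < 1 := by
  have hx' : a * ν.toFun x ≤ a := mul_le_of_le_one_right ha hx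
  have hy' : b * ν.toFun y < b := mul_lt_of_lt_one_right hb hy
  exact (ν.map_smul_add_smul_le ha hb.le x y).trans_lt (by linarith)

lemma midpoint_lt_one {x y : Fin d → ℝ} (hx : ν.toFun x ≤ 1) (hy : ν.toFun y ≤ 1)
    (hxy : x ≠ y) : ν.toFun ((1 / 2 : ℝ) • (x + y)) < 1 := by
  by_cases hsphere : ν.toFun x = 1 ∧ ν.toFun y = 1
  · exact ν.strictly_convex x y hsphere.1 hsphere.2 hxy
  · have hsum : ν.toFun x + ν.toFun y < 2 := by
      rcases not_and_or.1 hsphere with h | h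
      · linarith [lt_of_le_of_ne hx h]
      · linarith [lt_of_le_of_ne hy h]
    calc ν.toFun ((1 / 2 : ℝ) • (x + y)) ≤ 1 / 2 * (ν.toFun x + ν.toFun y) := by
          rw [ν.smul_eq, abs_of_pos (by norm_num)]
          exact mul_le_mul_of_nonneg_left (ν.add_le x y) (by norm_num)
      _ < 1 := by linarith

lemma mem_extremePoints_ball {x : Fin d → ℝ} (hx : ν.toFun x = 1) :
    x ∈ {y | ν.toFun y ≤ 1}.extremePoints ℝ := by
  refine mem_extremePoints.2 ⟨hx.le, fun y hy z hz hxyz => ?_⟩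
  obtain rfl : y = z := by
    by_contra hyz
    obtain ⟨a, b, ha, hb, hab, rfl⟩ := hxyz
    wlog hba : b ≤ a generalizing y z a b
    · exact this z hz y hy (Ne.symm hyz) b a hb ha (by linarith) (by rwa [add_comm]) (by linarith)
    -- `x` lies between `y` and the midpoint of `y` and `z`, which is strictly inside the ball.
    have hsplit : a • y + b • z = (a - b) • y + (2 * b) • ((1 / 2 : ℝ) • (y + z)) := by module
    have := ν.smul_add_smul_lt_one (a := a - b) (b := 2 * b) (sub_nonneg.2 hba) (by linarith)
      (by linarith) hy (ν.midpoint_lt_one hy hz hyz)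
    rw [hsplit] at hx
    linarith
  rw [openSegment_same, Set.mem_singleton_iff] at hxyz
  exact ⟨hxyz.symm, hxyz.symm⟩

lemma eq_one_of_mem_union_neg {V : Finset (Fin d → ℝ)} (hV : ∀ v ∈ V, ν.toFun v = 1)
    {x : Fin d → ℝ} (hx : x ∈ V ∪ -V) : ν.toFun x = 1 := by
  rcases Finset.mem_union.1 hx with hx | hx
  · exact hV x hx
  · obtain ⟨v, hv, rfl⟩ := Finset.mem_neg.1 hx
    rw [ν.map_neg, hV v hv]

lemma convInd_of_forall_eq_one {A : Set (Fin d → ℝ)} (hA : ∀ x ∈ A, ν.toFun x = 1) :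
    ConvInd A := by
  intro p hp hmem
  have hconv : Convex ℝ ({y | ν.toFun y ≤ 1} \ {p}) :=
    (ν.convex_ball.mem_extremePoints_iff_convex_sdiff.1 (ν.mem_extremePoints_ball (hA p hp))).2
  exact (convexHull_min (fun x hx => Set.mem_sdiff_of_mem (hA x hx.1).le hx.2) hconv hmem).2 rfl

end StrictNorm

section NonparallelDifferences

variable {E : Type*} [AddCommGroup E] [Module ℝ E] {T : Finset (E × E)}

lemma injOn_sub_of_nonparallel
    (hpar : ∀ e ∈ T, ∀ f ∈ T, e ≠ f → ∀ c : ℝ, e.1 - e.2 ≠ c • (f.1 - f.2)) :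
    Set.InjOn (fun e : E × E => e.1 - e.2) T := fun e he f hf hef =>
  of_not_not fun hne => hpar e he f hf hne 1 (by simpa using hef)

lemma disjoint_neg_image_sub_of_nonparallel [DecidableEq E] (hne : ∀ e ∈ T, e.1 ≠ e.2)
    (hpar : ∀ e ∈ T, ∀ f ∈ T, e ≠ f → ∀ c : ℝ, e.1 - e.2 ≠ c • (f.1 - f.2)) :
    Disjoint (T.image fun e => e.1 - e.2) (-T.image fun e => e.1 - e.2) := by
  rw [Finset.disjoint_left]
  rintro _ hv hv'
  obtain ⟨e, he, rfl⟩ := Finset.mem_image.1 hv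
  obtain ⟨_, hw, hvw⟩ := Finset.mem_neg.1 hv'
  obtain ⟨f, hf, rfl⟩ := Finset.mem_image.1 hw
  by_cases hfe : e = f
  · subst hfe
    have htwo : (2 : ℝ) • (e.1 - e.2) = 0 := by rw [two_smul, ← neg_add_cancel (e.1 - e.2), hvw]
    exact hne e he (sub_eq_zero.1 ((smul_eq_zero.1 htwo).resolve_left two_ne_zero))
  · exact hpar e he f hf hfe (-1) (by rw [← hvw, neg_one_smul])

lemma card_union_neg_image_sub_of_nonparallel [DecidableEq E] (hne : ∀ e ∈ T, e.1 ≠ e.2)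
    (hpar : ∀ e ∈ T, ∀ f ∈ T, e ≠ f → ∀ c : ℝ, e.1 - e.2 ≠ c • (f.1 - f.2)) :
    ((T.image fun e => e.1 - e.2) ∪ -T.image fun e => e.1 - e.2).card = 2 * T.card := by
  rw [Finset.card_union_of_disjoint (disjoint_neg_image_sub_of_nonparallel hne hpar),
    Finset.card_neg, Finset.card_image_of_injOn (injOn_sub_of_nonparallel hpar), two_mul]

end NonparallelDifferences

lemma coe_union_neg_subset_add_neg {G : Type*} [AddCommGroup G] [DecidableEq G] {V S : Finset G}
    (hV : (V : Set G) ⊆ (S : Set G) - (S : Set G)) :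
    ((V ∪ -V : Finset G) : Set G) ⊆ (S : Set G) + ((-S : Finset G) : Set G) := by
  rw [Finset.coe_union, Finset.coe_neg, Finset.coe_neg, ← sub_eq_add_neg]
  exact Set.union_subset hV (by simpa [neg_sub] using Set.neg_subset_neg.2 hV)

lemma card_le_Mfun {d m n : ℕ} {P Q S : Finset (Fin d → ℝ)} (hP : P.card = m) (hQ : Q.card = n)
    (hS : (S : Set (Fin d → ℝ)) ⊆ (P : Set (Fin d → ℝ)) + (Q : Set (Fin d → ℝ)))
    (hind : ConvInd (S : Set (Fin d → ℝ))) : S.card ≤ Mfun d m n := by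
  refine le_csSup ⟨m * n, ?_⟩ ⟨P, Q, S, hP, hQ, hS, hind, rfl⟩
  rintro k ⟨P, Q, S, rfl, rfl, hS, -, rfl⟩
  rw [← Finset.coe_add, Finset.coe_subset] at hS
  exact (Finset.card_le_card hS).trans Finset.card_add_le

lemma Nat.nonempty_of_pos_sSup {s : Set ℕ} (h : 0 < sSup s) : s.Nonempty :=
  Set.nonempty_iff_ne_empty.2 fun hs => by simp [hs] at h

lemma exists_eq_Wfun {d n : ℕ} (hW : 0 < Wfun d n) :
    ∃ (S : Finset (Fin d → ℝ)) (ν : StrictNorm d) (T : Finset ((Fin d → ℝ) × (Fin d → ℝ))),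
      S.card = n ∧
      (∀ e ∈ T, e.1 ∈ S ∧ e.2 ∈ S ∧ ν.toFun (e.1 - e.2) = 1) ∧
      (∀ e ∈ T, ∀ f ∈ T, e ≠ f → ∀ c : ℝ, e.1 - e.2 ≠ c • (f.1 - f.2)) ∧
      T.card = Wfun d n := by
  refine Nat.sSup_mem (Nat.nonempty_of_pos_sSup hW) ⟨n * n, ?_⟩
  rintro k ⟨S, ν, T, rfl, hT, -, rfl⟩
  rw [← Finset.card_product]
  exact Finset.card_le_card fun e he => Finset.mem_product.2 ⟨(hT e he).1, (hT e he).2.1⟩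

theorem two_W_le_M_general (d n : ℕ) :
    2 * Wfun d n ≤ Mfun d n n := by
  rcases Nat.eq_zero_or_pos (Wfun d n) with hW | hW
  · simp [hW]
  obtain ⟨S, ν, T, hS, hT, hpar, hcard⟩ := exists_eq_Wfun hW
  set V := T.image fun e => e.1 - e.2
  have hV : (V : Set (Fin d → ℝ)) ⊆ (S : Set (Fin d → ℝ)) - (S : Set (Fin d → ℝ)) := by
    simp only [V, Finset.coe_image, Set.image_subset_iff]
    exact fun e he => Set.sub_mem_sub (hT e he).1 (hT e he).2.1
  have hunit : ∀ v ∈ V, ν.toFun v = 1 := Finset.forall_mem_image.2 fun e he => (hT e he).2.2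
  have hne : ∀ e ∈ T, e.1 ≠ e.2 := fun e he h => by
    simpa [h, (ν.eq_zero_iff 0).2 rfl] using (hT e he).2.2
  calc 2 * Wfun d n = (V ∪ -V).card := by
        rw [card_union_neg_image_sub_of_nonparallel hne hpar, hcard]
    _ ≤ Mfun d n n :=
        card_le_Mfun hS (by rw [Finset.card_neg, hS]) (coe_union_neg_subset_add_neg hV)
          (ν.convInd_of_forall_eq_one fun _ hx => ν.eq_one_of_mem_union_neg hunit hx)

/-- For every `d ≥ 2` and `n ≥ 1`, `2 · W_d(n) ≤ M_d(n,n)`. -/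
theorem two_W_le_M (d n : ℕ) (hd : 2 ≤ d) (hn : 1 ≤ n) :
    2 * Wfun d n ≤ Mfun d n n :=
  two_W_le_M_general d n
end
end

section
/- For every n ≥ 1, E_3(n) ≥ ⌊n²/3⌋: there exists a set of n points in ℝ³ with at least ⌊n²/3⌋ pairs of points whose midpoints form a convexly independent set. -/
open Pointwise Filter

noncomputable section

/-!
Split the `n` points into three groups of sizes `⌊(n + i)/3⌋`, `i = 0, 1, 2`, and take all pairs
from group `i` to group `i + 1`: these are `⌊n²/3⌋` pairs.

Group `i` consists of the points `weightLift (s • eᵢ)`, `s = 1, 2, …`, where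
`weightLift w = (w₀ - w₂, w₁ - w₂, w ⬝ᵥ w)`. Weights of different groups are orthogonal, so the
midpoint of the pair with parameters `s, t` is `½ • weightLift w` for its weight
`w = s • eᵢ + t • eᵢ₊₁`. If `∑ c = 0`, the linear functional `x ↦ x₂ - 2c₀x₀ - 2c₁x₁` takes the value
`‖w - c‖² - ‖c‖²` at `weightLift w`. For `c = w - (s + t) • eᵢ₊₂`, the weight `w` is the unique
nearest point to `c` in the half-space `{v | 0 ≤ vᵢ₊₂}`, which contains all weights. So this
functional exposes the midpoint of every pair among all the midpoints, which gives both the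
injectivity of the midpoint map and the convex independence of the midpoints.
-/

open Finset

theorem notMem_convexHull_diff_of_forall_lt {E : Type*} [AddCommGroup E] [Module ℝ E]
    {S : Set E} {p : E} (φ : E →ₗ[ℝ] ℝ)
    (h : ∀ q ∈ S, q ≠ p → φ p < φ q) : p ∉ convexHull ℝ (S \ {p}) := fun hp =>
  lt_irrefl (φ p) <|
    convexHull_min (fun q hq => h q hq.1 hq.2) (convex_halfSpace_gt φ.isLinear (φ p)) hp

theorem card_le_Efun {d n : ℕ} {P : Finset (Fin d → ℝ)}
    {T : Finset ((Fin d → ℝ) × (Fin d → ℝ))} (hP : P.card = n)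
    (hT : ∀ e ∈ T, e.1 ∈ P ∧ e.2 ∈ P ∧ e.1 ≠ e.2)
    (hexposed : ∀ e ∈ T, ∃ φ : (Fin d → ℝ) →ₗ[ℝ] ℝ, ∀ e' ∈ T, e' ≠ e →
      φ (midpoint ℝ e.1 e.2) < φ (midpoint ℝ e'.1 e'.2)) :
    T.card ≤ Efun d n := by
  have eq_of_midpoint_eq : ∀ e ∈ T, ∀ e' ∈ T,
      midpoint ℝ e'.1 e'.2 = midpoint ℝ e.1 e.2 → e' = e := by
    intro e he e' he' h
    by_contra hne
    obtain ⟨φ, hφ⟩ := hexposed e he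
    exact (hφ e' he' hne).ne' (congrArg φ h)
  refine le_csSup ⟨n * n, ?_⟩ ⟨P, T, hP, fun e he => ⟨(hT e he).1, (hT e he).2.1,
    (hT e he).2.2, fun hrev => ?_⟩, fun e he e' he' h => ?_, ?_, rfl⟩
  · rintro k ⟨P', T', rfl, hT', -, -, rfl⟩
    calc T'.card ≤ (P' ×ˢ P').card :=
          card_le_card fun e he => mem_product.2 ⟨(hT' e he).1, (hT' e he).2.1⟩
      _ = P'.card * P'.card := card_product _ _
  · exact (hT e he).2.2
      (congrArg Prod.fst (eq_of_midpoint_eq e he _ hrev (midpoint_comm _ _))).symm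
  · exact eq_of_midpoint_eq e' he' e he h
  · rintro _ ⟨e, he, rfl⟩
    obtain ⟨φ, hφ⟩ := hexposed e he
    refine notMem_convexHull_diff_of_forall_lt φ ?_
    rintro _ ⟨e', he', rfl⟩ hne
    exact hφ e' he' fun h => hne (h ▸ rfl)

theorem sub_dotProduct_sub_lt {ι : Type*} [Fintype ι] [DecidableEq ι] {w w' c : ι → ℝ}
    {l : ι} {σ : ℝ} (hc : w - c = Pi.single l σ) (hσ : 0 ≤ σ) (hwl : w l = 0)
    (hw'l : 0 ≤ w' l) (hne : w' ≠ w) :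
    (w - c) ⬝ᵥ (w - c) < (w' - c) ⬝ᵥ (w' - c) := by
  have hpos : 0 < (w' - w) ⬝ᵥ (w' - w) :=
    lt_of_le_of_ne (sum_nonneg fun i _ => mul_self_nonneg _)
      (Ne.symm (dotProduct_self_eq_zero.not.2 (sub_ne_zero.2 hne)))
  have hsplit : w' - c = (w' - w) + Pi.single l σ := by rw [← hc]; abel
  simp only [hsplit, hc, add_dotProduct, dotProduct_add, Pi.add_apply, dotProduct_single,
    single_dotProduct, Pi.single_eq_same, Pi.sub_apply, hwl]
  nlinarith [mul_nonneg hw'l hσ]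

def weightLift (w : Fin 3 → ℝ) : Fin 3 → ℝ := ![w 0 - w 2, w 1 - w 2, w ⬝ᵥ w]

theorem weightLift_add {v w : Fin 3 → ℝ} (h : v ⬝ᵥ w = 0) :
    weightLift (v + w) = weightLift v + weightLift w := by
  have hsq : (v + w) ⬝ᵥ (v + w) = v ⬝ᵥ v + w ⬝ᵥ w := by
    rw [add_dotProduct, dotProduct_add, dotProduct_add, dotProduct_comm w v, h]; ring
  ext i; fin_cases i <;> simp [weightLift, hsq] <;> ring

def exposingFunctional (c : Fin 3 → ℝ) : Module.Dual ℝ (Fin 3 → ℝ) :=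
  dotProductEquiv ℝ (Fin 3) ![-2 * c 0, -2 * c 1, 1]

theorem exposingFunctional_weightLift {c : Fin 3 → ℝ} (hc : ∑ i, c i = 0) (w : Fin 3 → ℝ) :
    exposingFunctional c (weightLift w) = (w - c) ⬝ᵥ (w - c) - c ⬝ᵥ c := by
  rw [Fin.sum_univ_three] at hc
  simp [exposingFunctional, weightLift, dotProduct, Fin.sum_univ_three]
  linear_combination (2 * w 2) * hc

theorem sum_div_three (n : ℕ) : ∑ i : Fin 3, (n + i) / 3 = n := by
  simp [Fin.sum_univ_three]; omega

theorem sq_div_three_le (n : ℕ) :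
    n ^ 2 / 3 ≤ ∑ i : Fin 3, (n + i) / 3 * ((n + (i + 1 : Fin 3)) / 3) := by
  obtain ⟨q, r, hr, rfl⟩ : ∃ q r, r < 3 ∧ n = 3 * q + r :=
    ⟨n / 3, n % 3, Nat.mod_lt _ (by norm_num), (Nat.div_add_mod n 3).symm⟩
  simp only [Fin.sum_univ_three]
  rw [Nat.div_le_iff_le_mul_add_pred (by norm_num)]
  interval_cases r <;> simp [add_assoc, Nat.mul_add_div] <;> ring_nf <;> omega

def vertex (i : Fin 3) (s : ℕ) : Fin 3 → ℝ := weightLift (Pi.single i (s : ℝ))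

theorem vertex_inj {i j : Fin 3} {s t : ℕ} (hs : 1 ≤ s) (ht : 1 ≤ t)
    (h : vertex i s = vertex j t) : i = j ∧ s = t := by
  have h0 := congrFun h 0
  have h1 := congrFun h 1
  fin_cases i <;> fin_cases j <;> simp [vertex, weightLift] at h0 h1 ⊢ <;> omega

abbrev EdgeIndex := Σ _ : Fin 3, ℕ × ℕ

def edgeWeight (x : EdgeIndex) : Fin 3 → ℝ :=
  Pi.single x.1 (x.2.1 : ℝ) + Pi.single (x.1 + 1) (x.2.2 : ℝ)

def edge (x : EdgeIndex) : (Fin 3 → ℝ) × (Fin 3 → ℝ) :=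
  (vertex x.1 x.2.1, vertex (x.1 + 1) x.2.2)

theorem midpoint_edge (x : EdgeIndex) :
    midpoint ℝ (edge x).1 (edge x).2 = (⅟2 : ℝ) • weightLift (edgeWeight x) := by
  rw [midpoint_eq_smul_add, edge, vertex, vertex, edgeWeight,
    weightLift_add (by rw [single_dotProduct, Pi.single_eq_of_ne (by simp), mul_zero])]

def edgeIndices (m : Fin 3 → ℕ) : Finset EdgeIndex :=
  univ.sigma fun i => Icc 1 (m i) ×ˢ Icc 1 (m (i + 1))

theorem mem_edgeIndices {m : Fin 3 → ℕ} {x : EdgeIndex} :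
    x ∈ edgeIndices m ↔ (1 ≤ x.2.1 ∧ x.2.1 ≤ m x.1) ∧ 1 ≤ x.2.2 ∧ x.2.2 ≤ m (x.1 + 1) := by
  simp [edgeIndices]

theorem card_edgeIndices (m : Fin 3 → ℕ) :
    (edgeIndices m).card = ∑ i, m i * m (i + 1) := by
  simp [edgeIndices]

theorem edgeWeight_injOn (m : Fin 3 → ℕ) : Set.InjOn edgeWeight (edgeIndices m) := by
  rintro ⟨i, s, t⟩ hx ⟨j, s', t'⟩ hy h
  simp only [mem_coe, mem_edgeIndices] at hx hy
  have h0 := congrFun h 0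
  have h1 := congrFun h 1
  have h2 := congrFun h 2
  fin_cases i <;> fin_cases j <;> simp [edgeWeight] at h0 h1 h2 ⊢ <;> omega

theorem edge_injOn (m : Fin 3 → ℕ) : Set.InjOn edge (edgeIndices m) := by
  rintro ⟨i, s, t⟩ hx ⟨j, s', t'⟩ hy h
  simp only [mem_coe, mem_edgeIndices] at hx hy
  obtain ⟨rfl, rfl⟩ := vertex_inj hx.1.1 hy.1.1 (congrArg Prod.fst h)
  obtain ⟨-, rfl⟩ := vertex_inj hx.2.1 hy.2.1 (congrArg Prod.snd h)
  rfl

def edgeCenter (x : EdgeIndex) : Fin 3 → ℝ :=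
  edgeWeight x - Pi.single (x.1 + 2) ((x.2.1 : ℝ) + x.2.2)

theorem sum_edgeCenter (x : EdgeIndex) : ∑ i, edgeCenter x i = 0 := by
  simp [edgeCenter, edgeWeight, sum_add_distrib, sum_sub_distrib]

theorem edgeWeight_add_two (x : EdgeIndex) : edgeWeight x (x.1 + 2) = 0 := by
  simp [edgeWeight]

theorem edgeWeight_nonneg (x : EdgeIndex) : 0 ≤ edgeWeight x := by
  intro i
  simp only [edgeWeight, Pi.add_apply, Pi.single_apply, Pi.zero_apply]
  split_ifs <;> positivity

theorem exposingFunctional_midpoint_edge_lt {m : Fin 3 → ℕ} {x y : EdgeIndex}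
    (hx : x ∈ edgeIndices m) (hy : y ∈ edgeIndices m) (hne : y ≠ x) :
    exposingFunctional (edgeCenter x) (midpoint ℝ (edge x).1 (edge x).2) <
      exposingFunctional (edgeCenter x) (midpoint ℝ (edge y).1 (edge y).2) := by
  simp only [midpoint_edge, map_smul, smul_eq_mul,
    exposingFunctional_weightLift (sum_edgeCenter x)]
  refine mul_lt_mul_of_pos_left (sub_lt_sub_right ?_ _) (by norm_num)
  exact sub_dotProduct_sub_lt (sub_sub_cancel _ _) (by positivity) (edgeWeight_add_two x)
    (edgeWeight_nonneg y _) fun h => hne (edgeWeight_injOn m hy hx h)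

def vertexSet (m : Fin 3 → ℕ) : Finset (Fin 3 → ℝ) :=
  (univ.sigma fun i => Icc 1 (m i)).image fun v => vertex v.1 v.2

theorem card_vertexSet (m : Fin 3 → ℕ) : (vertexSet m).card = ∑ i, m i := by
  rw [vertexSet, card_image_of_injOn]
  · simp
  rintro ⟨i, s⟩ hv ⟨j, t⟩ hw h
  simp only [coe_sigma, Set.mem_sigma_iff, coe_univ, Set.mem_univ, true_and, coe_Icc,
    Set.mem_Icc] at hv hw
  obtain ⟨rfl, rfl⟩ := vertex_inj hv.1 hw.1 h
  rfl

theorem edge_mem_vertexSet {m : Fin 3 → ℕ} {x : EdgeIndex} (hx : x ∈ edgeIndices m) :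
    (edge x).1 ∈ vertexSet m ∧ (edge x).2 ∈ vertexSet m ∧ (edge x).1 ≠ (edge x).2 := by
  obtain ⟨i, s, t⟩ := x
  simp only [mem_edgeIndices] at hx
  refine ⟨mem_image.2 ⟨⟨i, s⟩, by simp [hx.1], rfl⟩,
    mem_image.2 ⟨⟨i + 1, t⟩, by simp [hx.2], rfl⟩, fun h => ?_⟩
  simpa using (vertex_inj hx.1.1 hx.2.1 h).1

theorem sum_mul_le_Efun_three (m : Fin 3 → ℕ) :
    ∑ i, m i * m (i + 1) ≤ Efun 3 (∑ i, m i) := by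
  rw [← card_edgeIndices, ← card_image_of_injOn (edge_injOn m)]
  refine card_le_Efun (card_vertexSet m) ?_ ?_
  · simp only [mem_image]
    rintro _ ⟨x, hx, rfl⟩
    exact edge_mem_vertexSet hx
  · simp only [mem_image]
    rintro _ ⟨x, hx, rfl⟩
    refine ⟨exposingFunctional (edgeCenter x), ?_⟩
    rintro _ ⟨y, hy, rfl⟩ hne
    exact exposingFunctional_midpoint_edge_lt hx hy fun h => hne (h ▸ rfl)

theorem E_three_lower_general (n : ℕ) :
    n ^ 2 / 3 ≤ Efun 3 n :=
  calc n ^ 2 / 3 ≤ ∑ i : Fin 3, (n + i) / 3 * ((n + (i + 1 : Fin 3)) / 3) := sq_div_three_le n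
    _ ≤ Efun 3 (∑ i : Fin 3, (n + i) / 3) := sum_mul_le_Efun_three _
    _ = Efun 3 n := by rw [sum_div_three]

/-- For every `n ≥ 1`, `E₃(n) ≥ ⌊n²/3⌋`. -/
theorem E_three_lower (n : ℕ) (hn : 1 ≤ n) :
    n ^ 2 / 3 ≤ Efun 3 n :=
  E_three_lower_general n
end
end

section
/- For every natural number k there exist three sets B₁, B₂, B₃ ⊂ ℝ³, each of cardinality k, such that the set (1/2)(B₁+B₂) ∪ (1/2)(B₂+B₃) ∪ (1/2)(B₃+B₁) of midpoints between points in different sets has exactly 3k² points and is convexly independent. -/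
open Pointwise Filter

noncomputable section

/-!
Take a short arc `u t = (√(1 - t²), t)`, `0 < t ≤ 1/10`, of the unit circle, lift it to the
points `(100 + √(1 - t²), t, 100)` of `ℝ³`, and let `B₁, B₂, B₃` be the images of `k` such points
under the powers of the cyclic coordinate shift. The midpoints are then the three shifted copies
of the `k²` points `m(s, t)` midway between a point of `B₁` and one of `B₂`. The vector
`n(s, t) = (√(1 - s²) √(1 - t²), s √(1 - t²), s t)` strictly exposes `m(s, t)`: within the same copy,
`n · (m(s, t) - m(s', t'))` is a positive combination of `‖u s - u s'‖²` and `‖u t - u t'‖²`,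
and in the other two copies the large coordinate `100` sits where `n` is small. Strict exposure of
every midpoint gives both convex independence and the injectivity of the `3k²` parametrisations.
-/

section Exposed

variable {d : ℕ} {ι : Type*} {F : ι → Fin d → ℝ} {S : Set ι}

theorem injOn_of_forall_exists_dotProduct_lt
    (h : ∀ a ∈ S, ∃ w : Fin d → ℝ, ∀ b ∈ S, b ≠ a → w ⬝ᵥ F b < w ⬝ᵥ F a) : S.InjOn F := by
  intro a ha b hb hab
  by_contra hne
  obtain ⟨w, hw⟩ := h a ha
  exact (hw b hb (Ne.symm hne)).ne (by rw [hab])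

theorem convInd_image_of_forall_exists_dotProduct_lt
    (h : ∀ a ∈ S, ∃ w : Fin d → ℝ, ∀ b ∈ S, b ≠ a → w ⬝ᵥ F b < w ⬝ᵥ F a) :
    ConvInd (F '' S) := by
  rintro _ ⟨a, ha, rfl⟩ hmem
  obtain ⟨w, hw⟩ := h a ha
  have hconv : Convex ℝ {x : Fin d → ℝ | w ⬝ᵥ x < w ⬝ᵥ F a} :=
    convex_halfSpace_lt ⟨dotProduct_add w, fun c x => dotProduct_smul c w x⟩ _
  have hsub : F '' S \ {F a} ⊆ {x | w ⬝ᵥ x < w ⬝ᵥ F a} := by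
    rintro _ ⟨⟨b, hb, rfl⟩, hne⟩
    exact hw b hb (by rintro rfl; exact hne rfl)
  exact lt_irrefl (w ⬝ᵥ F a) (convexHull_min hsub hconv hmem)

end Exposed

namespace ThreeSets

section Shift

variable {G R : Type*} [AddCommGroup G] [Semiring R]

def shift (i : G) : (G → R) →ₗ[R] G → R := LinearMap.funLeft R R (· - i)

@[simp] theorem shift_apply (i : G) (x : G → R) (j : G) : shift i x j = x (j - i) := rfl

theorem shift_shift (i i' : G) (x : G → R) : shift i (shift i' x) = shift (i + i') x := by
  ext j; simp [sub_sub]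

@[simp] theorem shift_zero (x : G → R) : shift 0 x = x := by
  ext j; simp

theorem shift_dotProduct_shift [Fintype G] (i i' : G) (x y : G → R) :
    shift i x ⬝ᵥ shift i' y = x ⬝ᵥ shift (i' - i) y := by
  simp only [dotProduct, shift_apply]
  exact Fintype.sum_equiv (Equiv.subRight i) _ _ fun j => by simp [sub_sub_eq_add_sub]

theorem shift_midpoint {R : Type*} [Ring R] [Invertible (2 : R)] (i : G) (x y : G → R) :
    shift i (midpoint R x y) = midpoint R (shift i x) (shift i y) :=
  (shift (R := R) i).toAffineMap.map_midpoint x y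

end Shift

open Set

noncomputable def circ (t : ℝ) : ℝ := √(1 - t ^ 2)

theorem circ_sq {t : ℝ} (ht : t ∈ Ioc (0 : ℝ) (1 / 10)) : circ t ^ 2 = 1 - t ^ 2 :=
  Real.sq_sqrt (by nlinarith [ht.1, ht.2])

theorem circ_mem_Icc {t : ℝ} (ht : t ∈ Ioc (0 : ℝ) (1 / 10)) : circ t ∈ Icc (9 / 10) 1 := by
  have hsq := circ_sq ht
  have hnn : 0 ≤ circ t := Real.sqrt_nonneg _
  constructor <;> nlinarith [ht.1, ht.2]

noncomputable def vertex (t : ℝ) : Fin 3 → ℝ := ![100 + circ t, t, 100]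

noncomputable def mid (s t : ℝ) : Fin 3 → ℝ := midpoint ℝ (vertex s) (shift 1 (vertex t))

noncomputable def normal (s t : ℝ) : Fin 3 → ℝ := ![circ s * circ t, s * circ t, s * t]

theorem mid_eq (s t : ℝ) :
    mid s t = ![(200 + circ s) / 2, (100 + s + circ t) / 2, (100 + t) / 2] := by
  ext j
  fin_cases j <;> simp [mid, vertex, midpoint_eq_smul_add] <;> ring

theorem mid_mem {s t : ℝ} (hs : s ∈ Ioc (0 : ℝ) (1 / 10)) (ht : t ∈ Ioc (0 : ℝ) (1 / 10)) :
    mid s t 0 ∈ Icc 100 101 ∧ mid s t 1 ∈ Icc 50 51 ∧ mid s t 2 ∈ Icc 50 51 := by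
  obtain ⟨hA, hA1⟩ := circ_mem_Icc hs
  obtain ⟨hB, hB1⟩ := circ_mem_Icc ht
  simp only [mid_eq, mem_Icc, Matrix.cons_val_zero, Matrix.cons_val_one, Matrix.cons_val]
  refine ⟨⟨?_, ?_⟩, ⟨?_, ?_⟩, ?_, ?_⟩ <;> linarith [hs.1, hs.2, ht.1, ht.2]

theorem normal_mem {s t : ℝ} (hs : s ∈ Ioc (0 : ℝ) (1 / 10)) (ht : t ∈ Ioc (0 : ℝ) (1 / 10)) :
    81 / 100 ≤ normal s t 0 ∧ normal s t 1 ∈ Icc 0 (1 / 10) ∧ normal s t 2 ∈ Icc 0 (1 / 100) := by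
  obtain ⟨hA, hA1⟩ := circ_mem_Icc hs
  obtain ⟨hB, hB1⟩ := circ_mem_Icc ht
  obtain ⟨hs0, hs1⟩ := hs
  obtain ⟨ht0, ht1⟩ := ht
  simp only [normal, mem_Icc, Matrix.cons_val_zero, Matrix.cons_val_one, Matrix.cons_val]
  refine ⟨by nlinarith, ⟨by positivity, by nlinarith⟩, by positivity, by nlinarith⟩

theorem normal_dotProduct_mid_lt {s t s' t' : ℝ} (hs : s ∈ Ioc (0 : ℝ) (1 / 10))
    (ht : t ∈ Ioc (0 : ℝ) (1 / 10)) (hs' : s' ∈ Ioc (0 : ℝ) (1 / 10))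
    (ht' : t' ∈ Ioc (0 : ℝ) (1 / 10)) (hne : (s', t') ≠ (s, t)) :
    normal s t ⬝ᵥ mid s' t' < normal s t ⬝ᵥ mid s t := by
  have key : normal s t ⬝ᵥ mid s t - normal s t ⬝ᵥ mid s' t' =
      (circ t * ((circ s - circ s') ^ 2 + (s - s') ^ 2) +
        s * ((circ t - circ t') ^ 2 + (t - t') ^ 2)) / 4 := by
    simp only [dotProduct, Fin.sum_univ_three, normal, mid_eq, Matrix.cons_val_zero,
      Matrix.cons_val_one, Matrix.cons_val]
    linear_combination
      (circ t / 4) * (circ_sq hs - circ_sq hs') + (s / 4) * (circ_sq ht - circ_sq ht')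
  have hB : 0 < circ t := by linarith [(circ_mem_Icc ht).1]
  rw [← sub_pos, key]
  obtain h | h : s ≠ s' ∨ t ≠ t' := by
    by_contra! h
    exact hne (by rw [h.1, h.2])
  · have : 0 < (s - s') ^ 2 := by positivity
    nlinarith [sq_nonneg (circ s - circ s'), sq_nonneg (circ t - circ t'), sq_nonneg (t - t'), hs.1]
  · have : 0 < (t - t') ^ 2 := by positivity
    nlinarith [sq_nonneg (circ s - circ s'), sq_nonneg (circ t - circ t'), sq_nonneg (s - s'), hs.1]

theorem normal_dotProduct_shift_mid_lt {s t s' t' : ℝ} (hs : s ∈ Ioc (0 : ℝ) (1 / 10))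
    (ht : t ∈ Ioc (0 : ℝ) (1 / 10)) (hs' : s' ∈ Ioc (0 : ℝ) (1 / 10))
    (ht' : t' ∈ Ioc (0 : ℝ) (1 / 10)) {d : Fin 3} (hd : d ≠ 0) :
    normal s t ⬝ᵥ shift d (mid s' t') < normal s t ⬝ᵥ mid s t := by
  obtain ⟨⟨hm0, hm0'⟩, ⟨hm1, hm1'⟩, hm2, hm2'⟩ := mid_mem hs ht
  obtain ⟨⟨hx0, hx0'⟩, ⟨hx1, hx1'⟩, hx2, hx2'⟩ := mid_mem hs' ht'
  obtain ⟨hn0, ⟨hn1, hn1'⟩, hn2, hn2'⟩ := normal_mem hs ht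
  fin_cases d
  · exact absurd rfl hd
  · simp only [dotProduct, Fin.sum_univ_three, shift_apply]
    simp only [Fin.reduceFinMk, Fin.isValue, zero_sub, show (-1 : Fin 3) = 2 from rfl,
      show (1 - 1 : Fin 3) = 0 from rfl, show (2 - 1 : Fin 3) = 1 from rfl]
    nlinarith
  · simp only [dotProduct, Fin.sum_univ_three, shift_apply]
    simp only [Fin.reduceFinMk, Fin.isValue, zero_sub, show (-2 : Fin 3) = 1 from rfl,
      show (1 - 2 : Fin 3) = 2 from rfl, show (2 - 2 : Fin 3) = 0 from rfl]
    nlinarith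

noncomputable def params (k : ℕ) : Finset ℝ :=
  (Finset.range k).image fun j : ℕ => ((j : ℝ) + 10)⁻¹

theorem card_params (k : ℕ) : (params k).card = k := by
  rw [params, Finset.card_image_of_injective _ fun a b h => by simpa using h, Finset.card_range]

theorem mem_Ioc_of_mem_params {k : ℕ} {t : ℝ} (ht : t ∈ params k) : t ∈ Ioc (0 : ℝ) (1 / 10) := by
  obtain ⟨j, -, rfl⟩ := Finset.mem_image.mp ht
  refine ⟨by positivity, ?_⟩
  rw [one_div]
  exact inv_anti₀ (by norm_num) (by linarith [j.cast_nonneg (α := ℝ)])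

noncomputable def blocks (k : ℕ) (i : Fin 3) : Finset (Fin 3 → ℝ) :=
  (params k).image fun t => shift i (vertex t)

theorem card_blocks (k : ℕ) (i : Fin 3) : (blocks k i).card = k := by
  rw [blocks, Finset.card_image_of_injective, card_params]
  intro a b h
  simpa [vertex] using congrFun h (1 + i)

def indices (k : ℕ) : Set (Fin 3 × ℝ × ℝ) := univ ×ˢ (params k : Set ℝ) ×ˢ (params k : Set ℝ)

noncomputable def cyclicMid (a : Fin 3 × ℝ × ℝ) : Fin 3 → ℝ := shift a.1 (mid a.2.1 a.2.2)

theorem cyclicMid_eq (i : Fin 3) (s t : ℝ) :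
    cyclicMid (i, s, t) = midpoint ℝ (shift i (vertex s)) (shift (i + 1) (vertex t)) := by
  rw [cyclicMid, mid, shift_midpoint, shift_shift]

theorem midSet_blocks (k : ℕ) :
    midSet (blocks k) = cyclicMid '' indices k := by
  ext x
  constructor
  · rintro ⟨i, j, hij, p, hp, q, hq, rfl⟩
    obtain ⟨s, hs, rfl⟩ := Finset.mem_image.mp hp
    obtain ⟨t, ht, rfl⟩ := Finset.mem_image.mp hq
    rcases (by decide : ∀ i j : Fin 3, i ≠ j → j = i + 1 ∨ i = j + 1) i j hij with rfl | rfl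
    · exact ⟨(i, s, t), ⟨mem_univ _, hs, ht⟩, cyclicMid_eq i s t⟩
    · exact ⟨(j, t, s), ⟨mem_univ _, ht, hs⟩, by rw [cyclicMid_eq, midpoint_comm]⟩
  · rintro ⟨⟨i, s, t⟩, ⟨-, hs, ht⟩, rfl⟩
    exact ⟨i, i + 1, (by decide : ∀ i : Fin 3, i ≠ i + 1) i, _,
      Finset.mem_image_of_mem _ hs, _, Finset.mem_image_of_mem _ ht, cyclicMid_eq i s t⟩

theorem cyclicMid_exposed (k : ℕ) :
    ∀ a ∈ indices k, ∃ w : Fin 3 → ℝ, ∀ b ∈ indices k, b ≠ a →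
      w ⬝ᵥ cyclicMid b < w ⬝ᵥ cyclicMid a := by
  rintro ⟨i, s, t⟩ ⟨-, hs, ht⟩
  refine ⟨shift i (normal s t), ?_⟩
  rintro ⟨i', s', t'⟩ ⟨-, hs', ht'⟩ hne
  replace hs := mem_Ioc_of_mem_params hs
  replace ht := mem_Ioc_of_mem_params ht
  replace hs' := mem_Ioc_of_mem_params hs'
  replace ht' := mem_Ioc_of_mem_params ht'
  simp only [cyclicMid, shift_dotProduct_shift, sub_self, shift_zero]
  by_cases hd : i' - i = 0
  · rw [sub_eq_zero.mp hd, sub_self, shift_zero]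
    refine normal_dotProduct_mid_lt hs ht hs' ht' fun h => hne ?_
    rw [sub_eq_zero.mp hd, h]
  · exact normal_dotProduct_shift_mid_lt hs ht hs' ht' hd

end ThreeSets

open ThreeSets in
/-- For every `k` there are three `k`-point sets `B₁, B₂, B₃ ⊂ ℝ³` such that the set
`½(B₁+B₂) ∪ ½(B₂+B₃) ∪ ½(B₃+B₁)` of midpoints between different sets has exactly
`3k²` points and is convexly independent. -/
theorem three_sets_construction (k : ℕ) :
    ∃ B : Fin 3 → Finset (Fin 3 → ℝ),
      (∀ i, (B i).card = k) ∧
      ConvInd (midSet B) ∧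
      (midSet B).ncard = 3 * k ^ 2 := by
  refine ⟨blocks k, card_blocks k, ?_, ?_⟩
  · rw [midSet_blocks]
    exact convInd_image_of_forall_exists_dotProduct_lt (cyclicMid_exposed k)
  · rw [midSet_blocks, (injOn_of_forall_exists_dotProduct_lt (cyclicMid_exposed k)).ncard_image,
      indices, Set.ncard_prod, Set.ncard_prod, Set.ncard_univ, Set.ncard_coe_finset, card_params,
      Nat.card_eq_fintype_card, Fintype.card_fin]
    ring
end
end

section
/- There do not exist five pairwise disjoint two-point sets C₁, C₂, C₃, C₄, C₅ ⊂ ℝ³ such that the union over all 1 ≤ i < j ≤ 5 of the midpoint sets (1/2)(C_i + C_j) is convexly independent. Equivalently, no geometric graph in ℝ³ whose edge midpoints are convexly independent contains the complete 5-partite graph K_{2,2,2,2,2}. -/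
open Pointwise Filter

noncomputable section

/-!
Write `Cᵢ = {aᵢ, bᵢ}`. If a point `x ∈ Cᵢ` lies in the convex hull of points `Z ∌ x` avoiding
`Cⱼ`, then for `y ∈ Cⱼ` the midpoint of `x` and `y` lies in the convex hull of the midpoints of `y`
with `Z`; similarly, if the segment `[x, y]` meets the convex hull of points from classes other
than `Cᵢ, Cⱼ`, the midpoint of `x` and `y` is a convex combination of midpoints of `x` and of `y`
with those points. Both contradict convex independence.

Five points in `ℝ³` are affinely dependent, so by Radon's theorem a transversal `t` (one point from
each class) splits into two parts with intersecting convex hulls; by the second observation the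
smaller part is a single point: `tᵢ ∈ conv {tₖ | k ≠ i}`. Applying this to `a` and to `a` with
`aᵢ` replaced by `bᵢ` places `aᵢ` in the convex hull of `bᵢ` and the `aₖ`, `k ≠ i, j`, for some
`j ≠ i` (by substitution, or, if `i` is isolated both times, by pushing `aᵢ` away from `bᵢ` inside
`conv {aₖ | k ≠ i}`). This contradicts the first observation.
-/

open Function

section ConvexHull

variable {𝕜 E ι : Type*} [Field 𝕜] [LinearOrder 𝕜] [AddCommGroup E] [Module 𝕜 E]

/-- Subtract from the barycentric weights of `x` the largest multiple `r` of those of `y` that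
keeps them nonnegative; the weight of some `z` drops to zero and `y` takes over the weight `r`. -/
theorem Finset.exists_mem_convexHull_insert_erase [IsStrictOrderedRing 𝕜] [DecidableEq E]
    {s : Finset E} {x y : E}
    (hx : x ∈ convexHull 𝕜 (s : Set E)) (hy : y ∈ convexHull 𝕜 (s : Set E)) :
    ∃ z ∈ s, x ∈ convexHull 𝕜 (insert y (s.erase z : Set E)) := by
  obtain ⟨w, hw₀, hw₁, rfl⟩ := Finset.mem_convexHull'.1 hx
  obtain ⟨v, hv₀, hv₁, rfl⟩ := Finset.mem_convexHull'.1 hy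
  have hpos : (s.filter (0 < v ·)).Nonempty := by
    obtain ⟨z, hz, hvz⟩ := s.exists_lt_of_sum_lt (f := 0) (g := v) (by simp [hv₁])
    exact ⟨z, Finset.mem_filter.2 ⟨hz, hvz⟩⟩
  obtain ⟨z₀, hz₀, hmin⟩ := (s.filter (0 < v ·)).exists_min_image (fun z => w z / v z) hpos
  rw [Finset.mem_filter] at hz₀
  set r := w z₀ / v z₀
  set k : E → 𝕜 := fun z => w z - r * v z
  have hk₀ : ∀ z ∈ s, 0 ≤ k z := by
    intro z hz
    rcases (hv₀ z hz).eq_or_lt with hvz | hvz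
    · simp [k, ← hvz, hw₀ z hz]
    · have := hmin z (Finset.mem_filter.2 ⟨hz, hvz⟩)
      rw [le_div_iff₀ hvz] at this
      simpa [k] using this
  have hkz₀ : k z₀ = 0 := by simp [k, r, hz₀.2.ne']
  have hsum : ∑ z ∈ s, update k z₀ r z = 1 := by
    rw [Finset.sum_update_of_mem hz₀.1, Finset.sdiff_singleton_eq_erase, Finset.sum_erase _ hkz₀]
    simp [k, Finset.sum_sub_distrib, ← Finset.mul_sum, hw₁, hv₁]
  have hcomb : ∑ z ∈ s, update k z₀ r z • update id z₀ (∑ z ∈ s, v z • z) z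
      = ∑ z ∈ s, w z • z := by
    simp_rw [apply_update₂ (fun _ a b => a • b) k id z₀]
    rw [Finset.sum_update_of_mem hz₀.1, Finset.sdiff_singleton_eq_erase,
      Finset.sum_erase _ (by simp [hkz₀])]
    simp [k, sub_smul, mul_smul, Finset.sum_sub_distrib, ← Finset.smul_sum]
  refine ⟨z₀, hz₀.1, hcomb ▸ (convex_convexHull 𝕜 _).sum_mem (fun z hz => ?_) hsum
    fun z hz => subset_convexHull 𝕜 _ ?_⟩
  · rcases eq_or_ne z z₀ with rfl | h
    · simpa using div_nonneg (hw₀ _ hz) (hv₀ _ hz)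
    · simpa [h] using hk₀ z hz
  · rcases eq_or_ne z z₀ with rfl | h
    · simp
    · simp [h, hz]

theorem exists_mem_convexHull_insert_image_compl [IsStrictOrderedRing 𝕜] [Finite ι]
    {a : ι → E} {i : ι} {x y : E}
    (hx : x ∈ convexHull 𝕜 (a '' {i}ᶜ)) (hy : y ∈ convexHull 𝕜 (a '' {i}ᶜ)) :
    ∃ j ≠ i, x ∈ convexHull 𝕜 (insert y (a '' {i, j}ᶜ)) := by
  classical
  set s := (Set.toFinite (a '' {i}ᶜ)).toFinset
  have hs : (s : Set E) = a '' {i}ᶜ := Set.Finite.coe_toFinset _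
  obtain ⟨_, hz, hx⟩ := s.exists_mem_convexHull_insert_erase (hs ▸ hx) (hs ▸ hy)
  obtain ⟨j, hji, rfl⟩ : ∃ j ∈ ({i}ᶜ : Set ι), a j = _ := by simpa [s] using hz
  refine ⟨j, hji, convexHull_mono (Set.insert_subset_insert ?_) hx⟩
  intro z hz
  obtain ⟨⟨k, hki, rfl⟩, hkj⟩ : (∃ k, k ≠ i ∧ a k = z) ∧ z ≠ a j := by simpa [s] using hz
  exact ⟨k, by simp [hki, ne_of_apply_ne a hkj], rfl⟩

theorem convexHull_image_compl_subset_of_update [DecidableEq ι] {a : ι → E} {i j : ι}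
    (hji : j ≠ i) {b : E} (hj : a j ∈ convexHull 𝕜 (update a i b '' {j}ᶜ)) :
    convexHull 𝕜 (a '' {i}ᶜ) ⊆ convexHull 𝕜 (insert b (a '' {i, j}ᶜ)) := by
  have hupdate : update a i b '' {j}ᶜ ⊆ insert b (a '' {i, j}ᶜ) := by
    rintro _ ⟨k, hk, rfl⟩
    rcases eq_or_ne k i with rfl | hki
    · simp
    · exact Set.mem_insert_of_mem _ ⟨k, by simp_all, (update_of_ne hki _ _).symm⟩
  refine convexHull_min ?_ (convex_convexHull 𝕜 _)
  rintro _ ⟨k, hk, rfl⟩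
  rcases eq_or_ne k j with rfl | hkj
  · exact convexHull_mono hupdate hj
  · exact subset_convexHull 𝕜 _ (Set.mem_insert_of_mem _ ⟨k, by simp_all, rfl⟩)

end ConvexHull

section Midpoint

variable {E : Type*} [AddCommGroup E] [Module ℝ E]

theorem midpoint_right_inj {x y z : E} : midpoint ℝ x y = midpoint ℝ x z ↔ y = z := by
  rw [midpoint_eq_midpoint_iff_vsub_eq_vsub, vsub_self, eq_comm, vsub_eq_zero_iff_eq, eq_comm]

theorem midpoint_mem_convexHull_image {s : Set E} {x : E} (y : E) (hx : x ∈ convexHull ℝ s) :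
    midpoint ℝ y x ∈ convexHull ℝ (midpoint ℝ y '' s) := by
  have hhom : ⇑(AffineMap.homothety y (⅟2 : ℝ)) = midpoint ℝ y :=
    funext fun z => AffineMap.homothety_eq_lineMap y _ z
  rw [← hhom, ← AffineMap.image_convexHull]
  exact Set.mem_image_of_mem _ hx

theorem midpoint_mem_convexHull_of_mem_segment {s : Set E} {x y u : E} (hu : u ∈ segment ℝ x y)
    (hus : u ∈ convexHull ℝ s) :
    midpoint ℝ x y ∈ convexHull ℝ (midpoint ℝ x '' s ∪ midpoint ℝ y '' s) := by
  obtain ⟨α, β, hα, hβ, hαβ, rfl⟩ := hu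
  have hx := convexHull_mono (Set.subset_union_left (t := midpoint ℝ y '' s))
    (midpoint_mem_convexHull_image x hus)
  have hy := convexHull_mono (Set.subset_union_right (s := midpoint ℝ x '' s))
    (midpoint_mem_convexHull_image y hus)
  convert convex_convexHull ℝ _ hx hy hβ hα (by linarith) using 1
  obtain rfl : β = 1 - α := by linarith
  simp only [midpoint_eq_smul_add, invOf_eq_inv]
  module

end Midpoint

namespace ConvInd

variable {d : ℕ} {ι : Type*} {C : ι → Finset (Fin d → ℝ)}

theorem notMem_convexHull (h : ConvInd (midSet C)) {i j : ι} (hij : i ≠ j)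
    {x y : Fin d → ℝ} (hx : x ∈ C i) (hy : y ∈ C j) {Z : Set (Fin d → ℝ)}
    (hZ : ∀ z ∈ Z, ∃ k ≠ j, z ∈ C k) (hxZ : x ∉ Z) : x ∉ convexHull ℝ Z := by
  intro hxZ'
  refine h _ ⟨j, i, hij.symm, y, hy, x, hx, rfl⟩
    (convexHull_mono ?_ (midpoint_mem_convexHull_image y hxZ'))
  rintro _ ⟨z, hz, rfl⟩
  obtain ⟨k, hkj, hzk⟩ := hZ z hz
  exact ⟨⟨j, k, hkj.symm, y, hy, z, hzk, rfl⟩, fun he => hxZ (midpoint_right_inj.1 he ▸ hz)⟩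

theorem disjoint_segment_convexHull (h : ConvInd (midSet C))
    (hC : ∀ i j, i ≠ j → Disjoint (C i) (C j)) {i j : ι} (hij : i ≠ j)
    {x y : Fin d → ℝ} (hx : x ∈ C i) (hy : y ∈ C j) {Z : Set (Fin d → ℝ)}
    (hZ : ∀ z ∈ Z, ∃ k, k ≠ i ∧ k ≠ j ∧ z ∈ C k) :
    Disjoint (segment ℝ x y) (convexHull ℝ Z) := by
  refine Set.disjoint_left.2 fun u hu hu' => h _ ⟨i, j, hij, x, hx, y, hy, rfl⟩
    (convexHull_mono ?_ (midpoint_mem_convexHull_of_mem_segment hu hu'))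
  rintro _ (⟨z, hz, rfl⟩ | ⟨z, hz, rfl⟩) <;> obtain ⟨k, hki, hkj, hzk⟩ := hZ z hz
  · refine ⟨⟨i, k, hki.symm, x, hx, z, hzk, rfl⟩, fun he => ?_⟩
    exact Finset.disjoint_left.1 (hC k j hkj) hzk (midpoint_right_inj.1 he ▸ hy)
  · refine ⟨⟨j, k, hkj.symm, y, hy, z, hzk, rfl⟩, fun he => ?_⟩
    rw [Set.mem_singleton_iff, midpoint_comm x] at he
    exact Finset.disjoint_left.1 (hC k i hki) hzk (midpoint_right_inj.1 he ▸ hx)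

theorem exists_mem_convexHull_image_compl_of_ncard_le_two [Finite ι] (h : ConvInd (midSet C))
    (hC : ∀ i j, i ≠ j → Disjoint (C i) (C j)) {t : ι → Fin d → ℝ} (ht : ∀ k, t k ∈ C k)
    {I : Set ι} (hI : I.ncard ≤ 2)
    (hradon : (convexHull ℝ (t '' I) ∩ convexHull ℝ (t '' Iᶜ)).Nonempty) :
    ∃ i, t i ∈ convexHull ℝ (t '' {i}ᶜ) := by
  obtain ⟨u, hu, hu'⟩ := hradon
  interval_cases hn : I.ncard
  · rw [Set.ncard_eq_zero] at hn
    simp [hn] at hu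
  · obtain ⟨i, rfl⟩ := Set.ncard_eq_one.1 hn
    rw [Set.image_singleton, convexHull_singleton, Set.mem_singleton_iff] at hu
    exact ⟨i, hu ▸ hu'⟩
  · obtain ⟨i, j, hij, rfl⟩ := Set.ncard_eq_two.1 hn
    rw [Set.image_pair, convexHull_pair] at hu
    refine absurd hu' (Set.disjoint_left.1
      (h.disjoint_segment_convexHull hC hij (ht i) (ht j) ?_) hu)
    rintro _ ⟨k, hk, rfl⟩
    simp only [Set.mem_compl_iff, Set.mem_insert_iff, Set.mem_singleton_iff, not_or] at hk
    exact ⟨k, hk.1, hk.2, ht k⟩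

theorem exists_mem_convexHull_image_compl [Finite ι] (h : ConvInd (midSet C))
    (hC : ∀ i j, i ≠ j → Disjoint (C i) (C j)) {t : ι → Fin d → ℝ} (ht : ∀ k, t k ∈ C k)
    (hι : Nat.card ι ≤ 5) (hdep : ¬ AffineIndependent ℝ t) :
    ∃ i, t i ∈ convexHull ℝ (t '' {i}ᶜ) := by
  obtain ⟨I, hI⟩ := Convex.radon_partition hdep
  -- one side of the Radon partition has at most two points
  have hcard := Set.ncard_add_ncard_compl I
  rcases le_or_gt I.ncard 2 with hI2 | hI2
  · exact h.exists_mem_convexHull_image_compl_of_ncard_le_two hC ht hI2 hI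
  · exact h.exists_mem_convexHull_image_compl_of_ncard_le_two hC ht (I := Iᶜ) (by omega)
      (by rwa [compl_compl, Set.inter_comm])

theorem notMem_convexHull_insert_image_compl (h : ConvInd (midSet C))
    (hC : ∀ i j, i ≠ j → Disjoint (C i) (C j)) {a : ι → Fin d → ℝ} (ha : ∀ k, a k ∈ C k)
    {i j : ι} (hij : i ≠ j) {b : Fin d → ℝ} (hb : b ∈ C i) (hba : b ≠ a i) :
    a i ∉ convexHull ℝ (insert b (a '' {i, j}ᶜ)) := by
  refine h.notMem_convexHull hij (ha i) (ha j) ?_ ?_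
  · rintro _ (rfl | ⟨k, hk, rfl⟩)
    · exact ⟨i, hij, hb⟩
    · exact ⟨k, fun hkj => hk (by simp [hkj]), ha k⟩
  · rintro (he | ⟨k, hk, he⟩)
    · exact hba he.symm
    · exact Finset.disjoint_left.1 (hC k i fun hki => hk (by simp [hki])) (ha k) (he ▸ ha i)

end ConvInd

/-- There are no five pairwise disjoint two-point sets `C₁, …, C₅ ⊂ ℝ³` whose set of
midpoints between different `Cᵢ`'s is convexly independent (i.e. no geometric graph in
`ℝ³` with convexly independent edge midpoints contains `K_{2,2,2,2,2}`). -/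
theorem no_K22222 :
    ¬ ∃ C : Fin 5 → Finset (Fin 3 → ℝ),
      (∀ i, (C i).card = 2) ∧
      (∀ i j, i ≠ j → Disjoint (C i) (C j)) ∧
      ConvInd (midSet C) := by
  rintro ⟨C, hcard, hdisj, hCI⟩
  choose a b hab hC using fun i => Finset.card_eq_two.mp (hcard i)
  have ha : ∀ i, a i ∈ C i := fun i => by simp [hC]
  have hb : ∀ i, b i ∈ C i := fun i => by simp [hC]
  have hdep (t : Fin 5 → Fin 3 → ℝ) : ¬ AffineIndependent ℝ t := fun ht => by
    simpa using ht.card_le_finrank_succ.trans (Nat.succ_le_succ (Submodule.finrank_le _))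
  obtain ⟨i, hi⟩ := hCI.exists_mem_convexHull_image_compl hdisj ha (by simp) (hdep a)
  have ha' (k : Fin 5) : update a i (b i) k ∈ C k := by
    rcases eq_or_ne k i with rfl | hki
    · simpa using hb k
    · simpa [hki] using ha k
  obtain ⟨j, hj⟩ := hCI.exists_mem_convexHull_image_compl hdisj ha' (by simp) (hdep _)
  obtain ⟨j, hji, hmem⟩ : ∃ j ≠ i, a i ∈ convexHull ℝ (insert (b i) (a '' {i, j}ᶜ)) := by
    rcases eq_or_ne j i with rfl | hji
    · refine exists_mem_convexHull_insert_image_compl hi ?_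
      rwa [update_self, Set.image_congr fun k (hk : k ∈ ({j}ᶜ : Set (Fin 5))) =>
        update_of_ne hk (b j) a] at hj
    · refine ⟨j, hji, convexHull_image_compl_subset_of_update hji ?_ hi⟩
      rwa [update_of_ne hji] at hj
  exact hCI.notMem_convexHull_insert_image_compl hdisj ha hji.symm (hb i) (hab i).symm hmem
end
end

section
/- If {A_i : i ∈ I} is a strictly antipodal family of finite sets in ℝ^d, then the difference set ⋃_{i≠j} (A_i − A_j) = {p − q : p ∈ A_i, q ∈ A_j, i ≠ j} is convexly independent (and it is centrally symmetric). -/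
open Pointwise Filter

noncomputable section

/-!
Write `U` for the union of the family. For `p ∈ A i`, `q ∈ A j`, `i ≠ j`, strict antipodality gives a
functional `φ` attaining its minimum on `U` only at `p` and its maximum only at `q` (when `U = {p, q}`
the given `φ` may be degenerate, and any functional with `φ p < φ q` does). Then `φ (p' - q') > φ (p - q)`
for every other difference `p' - q'` of points of `U`, so the open half-space `{z | φ (p - q) < φ z}`
contains all the other points of the difference set, but not `p - q`.
-/

open Set

section ExposesPair

variable {𝕜 E : Type*} [Field 𝕜] [LinearOrder 𝕜] [AddCommGroup E] [Module 𝕜 E]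

def ExposesPair (S : Set E) (φ : E →ₗ[𝕜] 𝕜) (p q : E) : Prop :=
  ∀ s ∈ S, (s ≠ p → φ p < φ s) ∧ (s ≠ q → φ s < φ q)

theorem exposesPair_of_lt {S : Set E} {φ : E →ₗ[𝕜] 𝕜} {p q : E} (hpq : φ p < φ q)
    (h : ∀ r ∈ S, r ≠ p → r ≠ q → φ p < φ r ∧ φ r < φ q) : ExposesPair S φ p q := by
  intro s hs
  constructor
  · intro hsp
    rcases eq_or_ne s q with rfl | hsq
    · exact hpq
    · exact (h s hs hsp hsq).1
  · intro hsq
    rcases eq_or_ne s p with rfl | hsp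
    · exact hpq
    · exact (h s hs hsp hsq).2

variable [IsStrictOrderedRing 𝕜]

theorem notMem_convexHull_diff_singleton_of_forall_lt {S : Set E} {x : E} (φ : E →ₗ[𝕜] 𝕜)
    (h : ∀ y ∈ S, y ≠ x → φ x < φ y) : x ∉ convexHull 𝕜 (S \ {x}) := fun hx =>
  lt_irrefl (φ x) <| convexHull_min (fun y hy => h y hy.1 hy.2)
    (convex_halfSpace_gt φ.isLinear (φ x)) hx

theorem ExposesPair.sub_lt_sub {S : Set E} {φ : E →ₗ[𝕜] 𝕜} {p q p' q' : E}
    (hφ : ExposesPair S φ p q) (hp' : p' ∈ S) (hq' : q' ∈ S) (hne : p' - q' ≠ p - q) :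
    φ (p - q) < φ (p' - q') := by
  have hp : φ p ≤ φ p' := by
    rcases eq_or_ne p' p with rfl | h
    · rfl
    · exact ((hφ p' hp').1 h).le
  have hq : φ q' ≤ φ q := by
    rcases eq_or_ne q' q with rfl | h
    · rfl
    · exact ((hφ q' hq').2 h).le
  rw [map_sub, map_sub]
  rcases eq_or_ne p' p with rfl | h
  · have := (hφ q' hq').2 fun hq'q => hne (by rw [hq'q])
    linarith
  · have := (hφ p' hp').1 h
    linarith

end ExposesPair

theorem StrictlyAntipodal.exists_exposesPair {d : ℕ} {ι : Type*} {A : ι → Set (Fin d → ℝ)}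
    (h : StrictlyAntipodal A) {i j : ι} (hij : i ≠ j) {p q : Fin d → ℝ} (hp : p ∈ A i)
    (hq : q ∈ A j) : ∃ φ : (Fin d → ℝ) →ₗ[ℝ] ℝ, ExposesPair (⋃ t, A t) φ p q := by
  obtain ⟨φ, hφ⟩ := h i j hij p hp q hq
  rcases eq_or_ne p q with rfl | hpq
  · exact ⟨φ, fun s hs => ⟨fun hsp => (hφ s hs hsp hsp).1, fun hsp => (hφ s hs hsp hsp).2⟩⟩
  by_cases hthird : ∃ r ∈ ⋃ t, A t, r ≠ p ∧ r ≠ q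
  · obtain ⟨r, hr, hrp, hrq⟩ := hthird
    exact ⟨φ, exposesPair_of_lt ((hφ r hr hrp hrq).1.trans (hφ r hr hrp hrq).2) hφ⟩
  · push Not at hthird
    obtain ⟨ψ, hψ⟩ := geometric_hahn_banach_point_point hpq
    exact ⟨ψ.toLinearMap, exposesPair_of_lt hψ fun r hr hrp hrq => absurd (hthird r hr hrp) hrq⟩

theorem diffSet_convInd_general {d : ℕ} {ι : Type*} (A : ι → Set (Fin d → ℝ))
    (h : StrictlyAntipodal A) :
    ConvInd (diffSet A) ∧ ∀ x ∈ diffSet A, -x ∈ diffSet A := by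
  constructor
  · rintro _ ⟨i, j, hij, p, hp, q, hq, rfl⟩
    obtain ⟨φ, hφ⟩ := h.exists_exposesPair hij hp hq
    refine notMem_convexHull_diff_singleton_of_forall_lt φ fun y hy hne => ?_
    obtain ⟨i', j', -, p', hp', q', hq', rfl⟩ := hy
    exact hφ.sub_lt_sub (mem_iUnion_of_mem i' hp') (mem_iUnion_of_mem j' hq') hne
  · rintro _ ⟨i, j, hij, p, hp, q, hq, rfl⟩
    exact ⟨j, i, hij.symm, q, hq, p, hp, neg_sub p q⟩

/-- If `{A i : i ∈ ι}` is a strictly antipodal family of finite sets in `ℝ^d`, then the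
difference set `⋃_{i ≠ j} (A i − A j)` is convexly independent and centrally symmetric. -/
theorem diffSet_convInd {d : ℕ} {ι : Type*} (A : ι → Set (Fin d → ℝ))
    (hfin : ∀ i, (A i).Finite) (h : StrictlyAntipodal A) :
    ConvInd (diffSet A) ∧ ∀ x ∈ diffSet A, -x ∈ diffSet A :=
  diffSet_convInd_general A h
end
end

section
/- Let d ≥ 3, let ‖·‖ be any norm on ℝ^d, let A be a finite set of points of ‖·‖-diameter at most 1, and let λ ∈ (0,1). Then A has a subset A′ of ‖·‖-diameter at most λ with |A′| ≥ |A| · λ^d / ((1+λ)^d · (d·log d + d·log log d + 5d)). In particular, for every d and λ ∈ (0,1) there is a constant c(d,λ) > 0 such that every finite set of diameter 1 in a d-dimensional normed space has a subset of diameter at most λ containing at least a c(d,λ)-fraction of its points. -/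
open Pointwise Filter

noncomputable section

/-!
Fatten the convex hull of `A` slightly to a convex body `K` of positive volume whose diameter is
barely more than `1`. The translates `a + cK`, `a ∈ A`, all lie in `(1 + c)K`, so comparing volumes
gives a point lying in at least `|A| c^d / (1 + c)^d` of them, and the corresponding points of `A`
are pairwise within `c · diam K`. Letting the fattening tend to zero yields a subset `A'` of
diameter at most `λ` with `|A| λ^d ≤ |A'| (1 + λ)^d`.
-/

open MeasureTheory Set Finset Module Metric Topology

open scoped Classical in
theorem MeasureTheory.Measure.exists_sum_measure_le_card_mul {X ι : Type*} [MeasurableSpace X]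
    [Nonempty X] (μ : Measure X) (A : Finset ι) {S : ι → Set X} {T : Set X}
    (hS : ∀ a ∈ A, MeasurableSet (S a)) (hST : ∀ a ∈ A, S a ⊆ T) :
    ∃ t, ∑ a ∈ A, μ (S a) ≤ #{a ∈ A | t ∈ S a} * μ T := by
  set N : X → ℕ := fun t ↦ #{a ∈ A | t ∈ S a}
  have hbdd : BddAbove (range N) := ⟨#A, by rintro _ ⟨t, rfl⟩; exact card_filter_le _ _⟩
  -- a point lying in as many of the sets `S a` as possible
  obtain ⟨t, ht⟩ := Nat.sSup_mem (range_nonempty N) hbdd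
  refine ⟨t, ?_⟩
  have hcount : ∀ x, ∑ a ∈ A, (S a).indicator 1 x ≤ T.indicator (fun _ ↦ (N t : ENNReal)) x := by
    intro x
    by_cases hx : x ∈ T
    · rw [indicator_of_mem hx, ht]
      simp only [indicator_apply, Pi.one_apply, sum_boole]
      exact_mod_cast le_csSup hbdd ⟨x, rfl⟩
    · rw [indicator_of_notMem hx]
      exact (Finset.sum_eq_zero fun a ha ↦ indicator_of_notMem (fun h ↦ hx (hST a ha h)) _).le
  calc ∑ a ∈ A, μ (S a) = ∫⁻ x, ∑ a ∈ A, (S a).indicator 1 x ∂μ := by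
        rw [lintegral_finsetSum' _ fun a ha ↦ (measurable_one.indicator (hS a ha)).aemeasurable]
        exact Finset.sum_congr rfl fun a ha ↦ (lintegral_indicator_one (hS a ha)).symm
    _ ≤ ∫⁻ x, T.indicator (fun _ ↦ (N t : ENNReal)) x ∂μ := lintegral_mono hcount
    _ ≤ N t * μ T := lintegral_indicator_const_le _ _

open scoped Classical in
theorem Convex.exists_point_mem_many_translates {E : Type*} [NormedAddCommGroup E]
    [NormedSpace ℝ E] [FiniteDimensional ℝ E] {K : Set E} (hK : Convex ℝ K) (hKc : IsCompact K)
    (hKi : (interior K).Nonempty) {A : Finset E} (hA : ↑A ⊆ K) {c : ℝ} (hc : 0 < c) :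
    ∃ t, (#A : ℝ) * c ^ finrank ℝ E ≤ #{a ∈ A | t ∈ a +ᵥ c • K} * (1 + c) ^ finrank ℝ E := by
  borelize E
  set μ : Measure E := Measure.addHaar
  set n := finrank ℝ E
  have hvol : ∀ r : ℝ, 0 ≤ r → μ (r • K) = ENNReal.ofReal (r ^ n) * μ K := fun r hr ↦ by
    rw [Measure.addHaar_smul, abs_of_nonneg (pow_nonneg hr n)]
  have hsub : ∀ a ∈ A, a +ᵥ c • K ⊆ (1 + c) • K := fun a ha ↦ by
    rw [hK.add_smul zero_le_one hc.le, one_smul]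
    exact vadd_set_subset_vadd (hA ha)
  obtain ⟨t, ht⟩ := μ.exists_sum_measure_le_card_mul A
    (fun a _ ↦ ((hKc.smul c).vadd a).measurableSet) hsub
  refine ⟨t, ?_⟩
  simp_rw [measure_vadd, hvol c hc.le, hvol (1 + c) (by positivity), sum_const, nsmul_eq_mul,
    ← mul_assoc] at ht
  have hK0 : μ K ≠ 0 := (μ.measure_pos_of_nonempty_interior hKi).ne'
  rw [ENNReal.mul_le_mul_iff_left hK0 hKc.measure_lt_top.ne, ← ENNReal.ofReal_natCast,
    ← ENNReal.ofReal_natCast, ← ENNReal.ofReal_mul (by positivity),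
    ← ENNReal.ofReal_mul (by positivity), ENNReal.ofReal_le_ofReal_iff (by positivity)] at ht
  exact ht

section VectorSpace

variable {E : Type*} [AddCommGroup E] [Module ℝ E] (p : Seminorm ℝ E)

theorem Seminorm.sub_le_of_mem_convexHull {A : Set E} {D : ℝ}
    (hA : ∀ x ∈ A, ∀ y ∈ A, p (x - y) ≤ D) {x y : E} (hx : x ∈ convexHull ℝ A)
    (hy : y ∈ convexHull ℝ A) : p (x - y) ≤ D := by
  have hxy : x - y ∈ convexHull ℝ (A - A) := by
    rw [convexHull_sub]
    exact sub_mem_sub hx hy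
  refine p.mem_closedBall_zero.1 (convexHull_min ?_ (p.convex_closedBall 0 D) hxy)
  rintro _ ⟨a, ha, b, hb, rfl⟩
  exact p.mem_closedBall_zero.2 (hA a ha b hb)

theorem Seminorm.sub_le_of_mem_vadd_smul {K : Set E} {s c : ℝ}
    (hK : ∀ x ∈ K, ∀ y ∈ K, p (x - y) ≤ s) (hc : 0 ≤ c) {t a b : E} (ha : t ∈ a +ᵥ c • K)
    (hb : t ∈ b +ᵥ c • K) : p (a - b) ≤ c * s := by
  obtain ⟨_, ⟨k, hk, rfl⟩, hak⟩ := ha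
  obtain ⟨_, ⟨l, hl, rfl⟩, rfl⟩ := hb
  have hab : a - b = c • (l - k) := by
    simp only [vadd_eq_add] at hak
    rw [smul_sub, sub_eq_sub_iff_add_eq_add, hak, add_comm]
  rw [hab, map_smul_eq_mul, Real.norm_of_nonneg hc]
  exact mul_le_mul_of_nonneg_left (hK l hl k hk) hc

end VectorSpace

section NormedSpace

variable {E : Type*} [NormedAddCommGroup E] [NormedSpace ℝ E] (p : Seminorm ℝ E)

theorem Seminorm.exists_le_mul_norm [FiniteDimensional ℝ E] : ∃ C, 0 < C ∧ ∀ x, p x ≤ C * ‖x‖ :=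
  p.bound_of_continuous_normedSpace (continuousOn_univ.1 (p.convexOn.continuousOn isOpen_univ))

theorem Seminorm.sub_le_of_mem_convexHull_add_closedBall {C : ℝ} (hC0 : 0 ≤ C)
    (hC : ∀ x, p x ≤ C * ‖x‖) {A : Set E} {D ε : ℝ} (hA : ∀ x ∈ A, ∀ y ∈ A, p (x - y) ≤ D)
    {x y : E} (hx : x ∈ convexHull ℝ A + Metric.closedBall 0 ε)
    (hy : y ∈ convexHull ℝ A + Metric.closedBall 0 ε) : p (x - y) ≤ D + 2 * C * ε := by
  obtain ⟨u, hu, v, hv, rfl⟩ := hx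
  obtain ⟨u', hu', v', hv', rfl⟩ := hy
  have hvv : ‖v - v'‖ ≤ 2 * ε := by
    rw [mem_closedBall_zero_iff] at hv hv'
    linarith [norm_sub_le v v']
  calc p (u + v - (u' + v')) = p ((u - u') + (v - v')) := by rw [add_sub_add_comm]
    _ ≤ p (u - u') + p (v - v') := map_add_le_add p _ _
    _ ≤ D + C * (2 * ε) := add_le_add (p.sub_le_of_mem_convexHull hA hu hu')
        ((hC _).trans (mul_le_mul_of_nonneg_left hvv hC0))
    _ = D + 2 * C * ε := by ring

theorem Seminorm.exists_large_subset_small_diam_add [FiniteDimensional ℝ E] {A : Finset E}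
    (hA : ∀ x ∈ A, ∀ y ∈ A, p (x - y) ≤ 1) {r δ : ℝ} (hr : 0 < r) (hδ : 0 < δ) :
    ∃ B ⊆ A, (∀ x ∈ B, ∀ y ∈ B, p (x - y) ≤ r) ∧
      (#A : ℝ) * r ^ finrank ℝ E ≤ #B * (1 + δ + r) ^ finrank ℝ E := by
  classical
  rcases A.eq_empty_or_nonempty with rfl | ⟨a₀, ha₀⟩
  · exact ⟨∅, subset_refl _, by simp⟩
  obtain ⟨C, hC0, hC⟩ := p.exists_le_mul_norm
  set ε := δ / (2 * C)
  have hε : 0 < ε := by positivity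
  set K := convexHull ℝ (A : Set E) + Metric.closedBall 0 ε
  have hKdiam : ∀ x ∈ K, ∀ y ∈ K, p (x - y) ≤ 1 + δ := fun x hx y hy ↦ by
    have := p.sub_le_of_mem_convexHull_add_closedBall hC0.le hC hA hx hy
    rwa [mul_div_cancel₀ _ (by positivity)] at this
  have hball : ∀ a ∈ A, Metric.closedBall a ε ⊆ K := fun a ha ↦ by
    rw [← add_zero a, ← singleton_add_closedBall]
    exact add_subset_add_right (singleton_subset_iff.2 (subset_convexHull ℝ _ ha))
  have hAK : (A : Set E) ⊆ K := fun a ha ↦ hball a ha (Metric.mem_closedBall_self hε.le)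
  have hKi : (interior K).Nonempty :=
    ⟨a₀, interior_mono (hball a₀ ha₀)
      (Metric.ball_subset_interior_closedBall (Metric.mem_ball_self hε))⟩
  have hK : Convex ℝ K := (convex_convexHull ℝ _).add (_root_.convex_closedBall 0 ε)
  have hKc : IsCompact K := (A.finite_toSet.isCompact_convexHull ℝ).add (isCompact_closedBall 0 ε)
  set c := r / (1 + δ)
  have hc : 0 < c := by positivity
  obtain ⟨t, ht⟩ := hK.exists_point_mem_many_translates hKc hKi hAK hc
  refine ⟨{a ∈ A | t ∈ a +ᵥ c • K}, filter_subset _ _, fun x hx y hy ↦ ?_, ?_⟩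
  · rw [mem_filter] at hx hy
    calc p (x - y) ≤ c * (1 + δ) := p.sub_le_of_mem_vadd_smul hKdiam hc.le hx.2 hy.2
      _ = r := div_mul_cancel₀ _ (by positivity)
  · have hrc : r = (1 + δ) * c := (mul_div_cancel₀ _ (by positivity)).symm
    have hrc' : 1 + δ + r = (1 + δ) * (1 + c) := by rw [hrc]; ring
    have key := mul_le_mul_of_nonneg_left ht
      (pow_nonneg (by positivity : (0 : ℝ) ≤ 1 + δ) (finrank ℝ E))
    rw [hrc', hrc, mul_pow, mul_pow]
    linarith

theorem Seminorm.exists_large_subset_small_diam [FiniteDimensional ℝ E] {A : Finset E}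
    (hA : ∀ x ∈ A, ∀ y ∈ A, p (x - y) ≤ 1) {r : ℝ} (hr : 0 < r) :
    ∃ B ⊆ A, (∀ x ∈ B, ∀ y ∈ B, p (x - y) ≤ r) ∧
      (#A : ℝ) * r ^ finrank ℝ E ≤ #B * (1 + r) ^ finrank ℝ E := by
  obtain ⟨B, hB, hBmax⟩ :=
    (A.powerset.filter fun B ↦ ∀ x ∈ B, ∀ y ∈ B, p (x - y) ≤ r).exists_max_image card ⟨∅, by simp⟩
  simp only [mem_filter, Finset.mem_powerset] at hB
  refine ⟨B, hB.1, hB.2, ?_⟩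
  have hlim : Tendsto (fun δ : ℝ ↦ (#B : ℝ) * (1 + δ + r) ^ finrank ℝ E) (𝓝[>] 0)
      (𝓝 (#B * (1 + r) ^ finrank ℝ E)) := by
    have hcont : Continuous fun δ : ℝ ↦ (#B : ℝ) * (1 + δ + r) ^ finrank ℝ E := by fun_prop
    simpa using (hcont.tendsto 0).mono_left nhdsWithin_le_nhds
  refine ge_of_tendsto hlim (eventually_nhdsWithin_of_forall fun δ (hδ : 0 < δ) ↦ ?_)
  obtain ⟨B', hB'A, hB'r, hB'⟩ := p.exists_large_subset_small_diam_add hA hr hδ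
  have hcard : #B' ≤ #B := hBmax B' (mem_filter.2 ⟨Finset.mem_powerset.2 hB'A, hB'r⟩)
  exact hB'.trans (by gcongr)

end NormedSpace

def NormOn.toSeminorm {d : ℕ} (ν : NormOn d) : Seminorm ℝ (Fin d → ℝ) :=
  Seminorm.of ν.toFun ν.add_le fun a x ↦ by rw [ν.smul_eq, Real.norm_eq_abs]

@[simp]
theorem NormOn.toSeminorm_apply {d : ℕ} (ν : NormOn d) (x : Fin d → ℝ) :
    ν.toSeminorm x = ν.toFun x :=
  rfl

theorem NormOn.exists_large_subset_small_diam {d : ℕ} (ν : NormOn d) {A : Finset (Fin d → ℝ)}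
    (hA : ∀ p ∈ A, ∀ q ∈ A, ν.toFun (p - q) ≤ 1) {lam : ℝ} (hlam : 0 < lam) :
    ∃ A' ⊆ A, (∀ p ∈ A', ∀ q ∈ A', ν.toFun (p - q) ≤ lam) ∧
      (A.card : ℝ) * lam ^ d ≤ A'.card * (1 + lam) ^ d := by
  simpa [Module.finrank_fin_fun] using ν.toSeminorm.exists_large_subset_small_diam hA hlam

/-- Covering lemma: for `d ≥ 3`, any norm on `ℝ^d`, any finite set `A` of diameter at
most `1` and any `λ ∈ (0,1)`, `A` has a subset of diameter at most `λ` of size at least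
`|A|·λ^d / ((1+λ)^d (d log d + d log log d + 5d))`; in particular, for every `d` and
`λ ∈ (0,1)` a positive fraction `c(d,λ)` of the points can be chosen. -/
theorem covering_lemma :
    (∀ d : ℕ, 3 ≤ d → ∀ (ν : NormOn d) (A : Finset (Fin d → ℝ)) (lam : ℝ),
      lam ∈ Set.Ioo (0 : ℝ) 1 →
      (∀ p ∈ A, ∀ q ∈ A, ν.toFun (p - q) ≤ 1) →
      ∃ A' ⊆ A, (∀ p ∈ A', ∀ q ∈ A', ν.toFun (p - q) ≤ lam) ∧
        (A.card : ℝ) * lam ^ d /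
            ((1 + lam) ^ d * (d * Real.log d + d * Real.log (Real.log d) + 5 * d))
          ≤ (A'.card : ℝ)) ∧
    (∀ d : ℕ, ∀ lam : ℝ, lam ∈ Set.Ioo (0 : ℝ) 1 →
      ∃ c : ℝ, 0 < c ∧ ∀ (ν : NormOn d) (A : Finset (Fin d → ℝ)),
        (∀ p ∈ A, ∀ q ∈ A, ν.toFun (p - q) ≤ 1) →
        ∃ A' ⊆ A, (∀ p ∈ A', ∀ q ∈ A', ν.toFun (p - q) ≤ lam) ∧
          c * (A.card : ℝ) ≤ (A'.card : ℝ)) := by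
  constructor
  · rintro d hd ν A lam ⟨hlam0, -⟩ hA
    obtain ⟨A', hA'A, hA'lam, hcard⟩ := ν.exists_large_subset_small_diam hA hlam0
    refine ⟨A', hA'A, hA'lam, ?_⟩
    have hd3 : (3 : ℝ) ≤ d := by exact_mod_cast hd
    have hlog : 1 ≤ Real.log d := by
      rw [Real.le_log_iff_exp_le (by positivity)]
      linarith [Real.exp_one_lt_three]
    have hL : 1 ≤ d * Real.log d + d * Real.log (Real.log d) + 5 * d := by
      have := Real.log_nonneg hlog
      nlinarith
    rw [div_le_iff₀ (by positivity)]
    calc (A.card : ℝ) * lam ^ d ≤ A'.card * (1 + lam) ^ d := hcard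
      _ ≤ A'.card * ((1 + lam) ^ d * (d * Real.log d + d * Real.log (Real.log d) + 5 * d)) := by
        gcongr
        exact le_mul_of_one_le_right (by positivity) hL
  · rintro d lam ⟨hlam0, -⟩
    refine ⟨lam ^ d / (1 + lam) ^ d, by positivity, fun ν A hA ↦ ?_⟩
    obtain ⟨A', hA'A, hA'lam, hcard⟩ := ν.exists_large_subset_small_diam hA hlam0
    refine ⟨A', hA'A, hA'lam, ?_⟩
    rw [div_mul_eq_mul_div, div_le_iff₀ (by positivity)]
    linarith
end
end
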